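/- arXiv:2602.11372 — 8 statements merged into one kernel-verified Lean document; each statement's English description precedes it below -/
import Mathlib

section
/- Let V be a real inner product space and let x, y ∈ V with x ≠ 0 and ‖y‖ < ‖x‖/2. Then |1/‖x‖ − 1/‖x − y‖| ≤ 2‖y‖²/‖x‖³ + 4‖y‖/‖x‖². (Note that ‖y‖ < ‖x‖/2 forces ‖x − y‖ > ‖x‖/2 > 0, so the left-hand side is defined.) -/
/-- In a real inner product space, for `x ≠ 0` and `‖y‖ < ‖x‖/2`,
`|1/‖x‖ − 1/‖x − y‖| ≤ 2‖y‖²/‖x‖³ + 4‖y‖/‖x‖²`. -/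
theorem abs_inv_norm_sub_inv_norm_sub_le
    {V : Type*} [NormedAddCommGroup V] [InnerProductSpace ℝ V]
    (x y : V) (hx : x ≠ 0) (hy : ‖y‖ < ‖x‖ / 2) :
    |1 / ‖x‖ - 1 / ‖x - y‖| ≤ 2 * ‖y‖ ^ 2 / ‖x‖ ^ 3 + 4 * ‖y‖ / ‖x‖ ^ 2 := by
  have ha : (0:ℝ) < ‖x‖ := norm_pos_iff.mpr hx
  have hb : ‖x‖ / 2 < ‖x - y‖ := by
    have h1 : ‖x‖ - ‖y‖ ≤ ‖x - y‖ := norm_sub_norm_le x y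
    linarith
  have hb0 : (0:ℝ) < ‖x - y‖ := by linarith
  have hdiff : |‖x - y‖ - ‖x‖| ≤ ‖y‖ := by
    have := abs_norm_sub_norm_le (x - y) x
    simpa using this
  have key : |1 / ‖x‖ - 1 / ‖x - y‖| ≤ ‖y‖ / (‖x‖ * ‖x - y‖) := by
    rw [div_sub_div _ _ ha.ne' hb0.ne', abs_div,
      abs_of_pos (mul_pos ha hb0)]
    gcongr
    simpa using hdiff
  have h2 : ‖y‖ / (‖x‖ * ‖x - y‖) ≤ 4 * ‖y‖ / ‖x‖ ^ 2 := by
    rw [div_le_div_iff₀ (mul_pos ha hb0) (by positivity)]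
    nlinarith [mul_nonneg (mul_nonneg (norm_nonneg y) ha.le) (by linarith : (0:ℝ) ≤ ‖x - y‖ - ‖x‖ / 2)]
  have h3 : (0:ℝ) ≤ 2 * ‖y‖ ^ 2 / ‖x‖ ^ 3 := by positivity
  linarith
end

section
/- For every τ > 0 there exists a constant C > 0 such that for every x ∈ E with ‖x‖ ≥ 1, the Lebesgue integral ∫_{{y ∈ E : ‖y − x‖ < ‖x‖/2}} (1 + ‖y‖)^{−3−τ} · ‖x − y‖^{−1} dy is at most C · ‖x‖^{−1−τ}. -/
open MeasureTheory Metric Set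
open scoped ENNReal

namespace NearSingAux

noncomputable section

/-- Polar-coordinate formula for lower integrals of radial functions on `ℝ³`. -/
lemma lpolar (g : ℝ → ℝ≥0∞) (hg : Measurable g) :
    ∫⁻ x : EuclideanSpace ℝ (Fin 3), g ‖x‖ =
      (volume : Measure (EuclideanSpace ℝ (Fin 3))).toSphere univ *
        ∫⁻ y in Ioi (0 : ℝ), ENNReal.ofReal (y ^ 2) * g y := by
  have hdim : Module.finrank ℝ (EuclideanSpace ℝ (Fin 3)) - 1 = 2 := by
    simp [finrank_euclideanSpace]
  have hmeas1 : Measurable fun p : sphere (0 : EuclideanSpace ℝ (Fin 3)) 1 × Ioi (0 : ℝ) =>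
      g p.2.1 := hg.comp (measurable_subtype_coe.comp measurable_snd)
  calc ∫⁻ x : EuclideanSpace ℝ (Fin 3), g ‖x‖
      = ∫⁻ x in ({0}ᶜ : Set (EuclideanSpace ℝ (Fin 3))), g ‖x‖ := by
        rw [restrict_compl_singleton]
    _ = ∫⁻ x : ({0}ᶜ : Set (EuclideanSpace ℝ (Fin 3))), g ‖x.1‖
          ∂((volume : Measure (EuclideanSpace ℝ (Fin 3))).comap Subtype.val) :=
        (lintegral_subtype_comap (measurableSet_singleton 0).compl fun x => g ‖x‖).symm
    _ = ∫⁻ x : ({0}ᶜ : Set (EuclideanSpace ℝ (Fin 3))),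
          g ((homeomorphUnitSphereProd (EuclideanSpace ℝ (Fin 3)) x).2 : ℝ)
          ∂((volume : Measure (EuclideanSpace ℝ (Fin 3))).comap Subtype.val) :=
        lintegral_congr fun x => by rw [homeomorphUnitSphereProd_apply_snd_coe]
    _ = ∫⁻ p : sphere (0 : EuclideanSpace ℝ (Fin 3)) 1 × Ioi (0 : ℝ), g p.2.1
          ∂((volume : Measure (EuclideanSpace ℝ (Fin 3))).toSphere.prod
            (.volumeIoiPow (Module.finrank ℝ (EuclideanSpace ℝ (Fin 3)) - 1))) :=
        (volume : Measure (EuclideanSpace ℝ (Fin 3))).measurePreserving_homeomorphUnitSphereProd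
          |>.lintegral_comp hmeas1
    _ = ∫⁻ _ : sphere (0 : EuclideanSpace ℝ (Fin 3)) 1,
          (∫⁻ y : Ioi (0 : ℝ), g y.1 ∂(Measure.volumeIoiPow 2))
          ∂(volume : Measure (EuclideanSpace ℝ (Fin 3))).toSphere := by
        rw [hdim, lintegral_prod _ hmeas1.aemeasurable]
    _ = (volume : Measure (EuclideanSpace ℝ (Fin 3))).toSphere univ *
          ∫⁻ y : Ioi (0 : ℝ), g y.1 ∂(Measure.volumeIoiPow 2) := by
        rw [lintegral_const, mul_comm]
    _ = (volume : Measure (EuclideanSpace ℝ (Fin 3))).toSphere univ *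
          ∫⁻ y in Ioi (0 : ℝ), ENNReal.ofReal (y ^ 2) * g y := by
        congr 1
        rw [Measure.volumeIoiPow,
          lintegral_withDensity_eq_lintegral_mul _
            ((measurable_subtype_coe.pow_const _).ennreal_ofReal)
            (show Measurable fun y : Ioi (0 : ℝ) => g y.1 from
              hg.comp measurable_subtype_coe)]
        exact lintegral_subtype_comap measurableSet_Ioi fun y => ENNReal.ofReal (y ^ 2) * g y

/-- Bound for the lower integral of `‖z‖⁻¹` over a ball in `ℝ³`. -/
lemma lintegral_inv_norm_ball {R : ℝ} (hR : 0 < R) :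
    ∫⁻ z in ball (0 : EuclideanSpace ℝ (Fin 3)) R, ENNReal.ofReal ‖z‖⁻¹
      ≤ (volume : Measure (EuclideanSpace ℝ (Fin 3))).toSphere univ * ENNReal.ofReal (R ^ 2) := by
  set g : ℝ → ℝ≥0∞ := (Iio R).indicator (fun y => ENNReal.ofReal y⁻¹) with hgdef
  have hg : Measurable g := (measurable_inv.ennreal_ofReal).indicator measurableSet_Iio
  have h1 : ∫⁻ z in ball (0 : EuclideanSpace ℝ (Fin 3)) R, ENNReal.ofReal ‖z‖⁻¹
      = ∫⁻ z : EuclideanSpace ℝ (Fin 3), g ‖z‖ := by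
    rw [← lintegral_indicator measurableSet_ball]
    congr 1
    ext z
    by_cases hz : ‖z‖ < R <;>
      simp [hgdef, Set.indicator, mem_ball, dist_zero_right, hz]
  rw [h1, lpolar g hg]
  gcongr
  calc ∫⁻ y in Ioi (0 : ℝ), ENNReal.ofReal (y ^ 2) * g y
      = ∫⁻ y in Ioo (0 : ℝ) R, ENNReal.ofReal y := by
        rw [← lintegral_indicator measurableSet_Ioi, ← lintegral_indicator measurableSet_Ioo]
        congr 1
        ext y
        by_cases h1 : 0 < y
        · by_cases h2 : y < R
          · have hy : y ^ 2 * y⁻¹ = y := by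
              field_simp
            simp only [Set.indicator, hgdef, mem_Ioi, mem_Ioo, mem_Iio, h1, h2, and_true,
              if_true]
            rw [← ENNReal.ofReal_mul (sq_nonneg y), hy]
          · simp [Set.indicator, hgdef, mem_Ioi, mem_Ioo, mem_Iio, h1, h2]
        · simp [Set.indicator, mem_Ioi, mem_Ioo, h1]
    _ ≤ ∫⁻ _ in Ioo (0 : ℝ) R, ENNReal.ofReal R :=
        setLIntegral_mono' measurableSet_Ioo fun y hy =>
          ENNReal.ofReal_le_ofReal hy.2.le
    _ = ENNReal.ofReal R * volume (Ioo (0 : ℝ) R) := setLIntegral_const _ _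
    _ = ENNReal.ofReal (R ^ 2) := by
        rw [Real.volume_Ioo, sub_zero, ← ENNReal.ofReal_mul hR.le, sq]

end

end NearSingAux

/-- For every `τ > 0` there is `C > 0` such that for every `x ∈ ℝ³`
with `‖x‖ ≥ 1`,
`∫_{‖y − x‖ < ‖x‖/2} (1 + ‖y‖)^{-3-τ} ‖x − y‖⁻¹ dy ≤ C ‖x‖^{-1-τ}`. -/
theorem near_singularity_integral_decay (τ : ℝ) (hτ : 0 < τ) :
    ∃ C > (0 : ℝ), ∀ x : EuclideanSpace ℝ (Fin 3), 1 ≤ ‖x‖ →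
      (∫ y in {y : EuclideanSpace ℝ (Fin 3) | ‖y - x‖ < ‖x‖ / 2},
          (1 + ‖y‖) ^ (-3 - τ) * ‖x - y‖⁻¹)
        ≤ C * ‖x‖ ^ (-1 - τ) := by
  classical
  set v : ℝ≥0∞ := (volume : Measure (EuclideanSpace ℝ (Fin 3))).toSphere Set.univ with hv
  have hvfin : v ≠ ⊤ := measure_ne_top _ _
  refine ⟨v.toReal * 2 ^ (1 + τ) + 1, by positivity, fun x hx => ?_⟩
  have hxpos : (0 : ℝ) < ‖x‖ := lt_of_lt_of_le one_pos hx
  set R : ℝ := ‖x‖ / 2 with hRdef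
  have hR : 0 < R := by positivity
  have hsball : {y : EuclideanSpace ℝ (Fin 3) | ‖y - x‖ < ‖x‖ / 2} = Metric.ball x R := by
    ext y
    simp [Metric.mem_ball, dist_eq_norm, hRdef]
  set F : EuclideanSpace ℝ (Fin 3) → ℝ := fun y => (1 + ‖y‖) ^ (-3 - τ) * ‖x - y‖⁻¹ with hFdef
  have hFmeas : Measurable F :=
    ((measurable_const.add measurable_norm).pow_const _).mul
      ((measurable_const.sub measurable_id).norm.inv)
  have hFnonneg : ∀ y, 0 ≤ F y := fun y => by
    have h1 : (0 : ℝ) ≤ (1 + ‖y‖) ^ (-3 - τ) := Real.rpow_nonneg (by positivity) _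
    have h2 : (0 : ℝ) ≤ ‖x - y‖⁻¹ := inv_nonneg.2 (norm_nonneg _)
    exact mul_nonneg h1 h2
  rw [hsball]
  -- rewrite as a lower integral
  rw [MeasureTheory.integral_eq_lintegral_of_nonneg_ae (ae_of_all _ hFnonneg)
    hFmeas.aestronglyMeasurable]
  -- the key lintegral bound
  have hpt : ∀ y ∈ Metric.ball x R,
      ENNReal.ofReal (F y) ≤ ENNReal.ofReal (R ^ (-3 - τ)) * ENNReal.ofReal ‖x - y‖⁻¹ := by
    intro y hy
    rw [← ENNReal.ofReal_mul (Real.rpow_nonneg hR.le _)]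
    apply ENNReal.ofReal_le_ofReal
    apply mul_le_mul_of_nonneg_right _ (inv_nonneg.2 (norm_nonneg _))
    have hyx : ‖x - y‖ < R := by
      rw [norm_sub_rev]
      simpa [Metric.mem_ball, dist_eq_norm] using hy
    have hbase : R ≤ 1 + ‖y‖ := by
      have := norm_sub_norm_le x y
      rw [hRdef] at *
      have h2 : ‖x‖ - ‖y‖ ≤ ‖x - y‖ := norm_sub_norm_le x y
      linarith
    exact Real.rpow_le_rpow_of_nonpos hR hbase (by linarith)
  have htrans : ∫⁻ y in Metric.ball x R, ENNReal.ofReal ‖x - y‖⁻¹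
      = ∫⁻ z in Metric.ball (0 : EuclideanSpace ℝ (Fin 3)) R, ENNReal.ofReal ‖z‖⁻¹ := by
    set G : EuclideanSpace ℝ (Fin 3) → ℝ≥0∞ :=
      (Metric.ball (0 : EuclideanSpace ℝ (Fin 3)) R).indicator
        (fun z => ENNReal.ofReal ‖z‖⁻¹) with hGdef
    have hG : Measurable G :=
      (measurable_norm.inv.ennreal_ofReal).indicator measurableSet_ball
    have hkey : ∀ y, (Metric.ball x R).indicator
        (fun y => ENNReal.ofReal ‖x - y‖⁻¹) y = G (x - y) := by
      intro y
      by_cases h : y ∈ Metric.ball x R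
      · have h' : x - y ∈ Metric.ball (0 : EuclideanSpace ℝ (Fin 3)) R := by
          rw [Metric.mem_ball, dist_zero_right, norm_sub_rev]
          simpa [Metric.mem_ball, dist_eq_norm] using h
        simp [hGdef, Set.indicator, h, h']
      · have h' : x - y ∉ Metric.ball (0 : EuclideanSpace ℝ (Fin 3)) R := by
          rw [Metric.mem_ball, dist_zero_right, norm_sub_rev]
          intro hc
          exact h (by simpa [Metric.mem_ball, dist_eq_norm] using hc)
        simp [hGdef, Set.indicator, h, h']
    calc ∫⁻ y in Metric.ball x R, ENNReal.ofReal ‖x - y‖⁻¹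
        = ∫⁻ y, (Metric.ball x R).indicator (fun y => ENNReal.ofReal ‖x - y‖⁻¹) y := by
          rw [lintegral_indicator measurableSet_ball]
      _ = ∫⁻ y, G (x - y) := by simp_rw [hkey]
      _ = ∫⁻ z, G z := (Measure.measurePreserving_sub_left volume x).lintegral_comp hG
      _ = ∫⁻ z in Metric.ball (0 : EuclideanSpace ℝ (Fin 3)) R, ENNReal.ofReal ‖z‖⁻¹ := by
          rw [hGdef, lintegral_indicator measurableSet_ball]
  have hbound : ∫⁻ y in Metric.ball x R, ENNReal.ofReal (F y)
      ≤ ENNReal.ofReal (R ^ (-3 - τ)) * (v * ENNReal.ofReal (R ^ 2)) := by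
    calc ∫⁻ y in Metric.ball x R, ENNReal.ofReal (F y)
        ≤ ∫⁻ y in Metric.ball x R,
            ENNReal.ofReal (R ^ (-3 - τ)) * ENNReal.ofReal ‖x - y‖⁻¹ :=
          setLIntegral_mono' measurableSet_ball hpt
      _ = ENNReal.ofReal (R ^ (-3 - τ)) * ∫⁻ y in Metric.ball x R, ENNReal.ofReal ‖x - y‖⁻¹ :=
          lintegral_const_mul' _ _ ENNReal.ofReal_ne_top
      _ = ENNReal.ofReal (R ^ (-3 - τ)) *
            ∫⁻ z in Metric.ball (0 : EuclideanSpace ℝ (Fin 3)) R, ENNReal.ofReal ‖z‖⁻¹ := by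
          rw [htrans]
      _ ≤ ENNReal.ofReal (R ^ (-3 - τ)) * (v * ENNReal.ofReal (R ^ 2)) := by
          gcongr
          exact NearSingAux.lintegral_inv_norm_ball hR
  have hfin : ENNReal.ofReal (R ^ (-3 - τ)) * (v * ENNReal.ofReal (R ^ 2)) ≠ ⊤ := by
    apply ENNReal.mul_ne_top ENNReal.ofReal_ne_top
    exact ENNReal.mul_ne_top hvfin ENNReal.ofReal_ne_top
  have hmain : (∫⁻ y in Metric.ball x R, ENNReal.ofReal (F y)).toReal
      ≤ R ^ (-3 - τ) * (v.toReal * R ^ 2) := by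
    have := ENNReal.toReal_mono hfin hbound
    rwa [ENNReal.toReal_mul, ENNReal.toReal_mul, ENNReal.toReal_ofReal
      (Real.rpow_nonneg hR.le _), ENNReal.toReal_ofReal (sq_nonneg R)] at this
  refine le_trans hmain ?_
  -- final algebra
  have halg : R ^ (-3 - τ) * (v.toReal * R ^ 2) = v.toReal * (2 : ℝ) ^ (1 + τ) * ‖x‖ ^ (-1 - τ) := by
    have h1 : R ^ (-3 - τ) * R ^ (2 : ℝ) = R ^ (-1 - τ) := by
      rw [← Real.rpow_add hR]
      ring_nf
    have h2 : R ^ (2 : ℝ) = R ^ (2 : ℕ) := by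
      rw [← Real.rpow_natCast R 2]
      norm_num
    have h3 : R ^ (-1 - τ) = ‖x‖ ^ (-1 - τ) * (2 : ℝ) ^ (1 + τ) := by
      rw [hRdef, Real.div_rpow (norm_nonneg x) (by norm_num : (0:ℝ) ≤ 2)]
      rw [div_eq_mul_inv, ← Real.rpow_neg (by norm_num : (0:ℝ) ≤ 2)]
      congr 1
      ring
    calc R ^ (-3 - τ) * (v.toReal * R ^ 2)
        = v.toReal * (R ^ (-3 - τ) * R ^ (2 : ℝ)) := by rw [h2]; ring
      _ = v.toReal * R ^ (-1 - τ) := by rw [h1]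
      _ = v.toReal * (2 : ℝ) ^ (1 + τ) * ‖x‖ ^ (-1 - τ) := by rw [h3]; ring
  rw [halg]
  have hxp : (0 : ℝ) ≤ ‖x‖ ^ (-1 - τ) := Real.rpow_nonneg (norm_nonneg x) _
  nlinarith [hxp]
end

section
/- For every τ ∈ (0, 1) there exists a constant C > 0 such that for every x ∈ E with ‖x‖ ≥ 1, the Lebesgue integral ∫_{{y ∈ E : ‖y‖ < ‖x‖/2}} |1/‖x‖ − 1/‖x − y‖| · (1 + ‖y‖)^{−3−τ} dy is at most C · ‖x‖^{−1−τ}. -/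
open MeasureTheory Metric Set intervalIntegral

local notation "E3" => EuclideanSpace ℝ (Fin 3)

/-- Transfer of integrability from `(0,∞)` with weight `r²` to `ℝ³`. -/
lemma aux_integrable_comp_norm (f : ℝ → ℝ)
    (hf : IntegrableOn (fun r : ℝ => r ^ 2 * f r) (Set.Ioi (0 : ℝ))) :
    Integrable (fun x : E3 => f ‖x‖) := by
  have hdim : Module.finrank ℝ E3 = 3 := finrank_euclideanSpace_fin
  have h1 : Integrable ((fun r : ℝ => f r * r ^ 2) ∘ (Subtype.val : Set.Ioi (0:ℝ) → ℝ))
      ((volume : Measure ℝ).comap Subtype.val) := by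
    apply ((MeasurableEmbedding.subtype_coe measurableSet_Ioi).integrable_map_iff).1
    rw [map_comap_subtype_coe measurableSet_Ioi]
    exact hf.congr_fun (fun x _ => mul_comm _ _) measurableSet_Ioi
  have h2 : Integrable (fun r : Set.Ioi (0:ℝ) => f r.1) (Measure.volumeIoiPow 2) := by
    rw [Measure.volumeIoiPow,
      integrable_withDensity_iff ((measurable_subtype_coe.pow_const 2).ennreal_ofReal)
        (Filter.Eventually.of_forall fun x => ENNReal.ofReal_lt_top)]
    simp [ENNReal.toReal_ofReal (sq_nonneg _)]
    exact h1
  have h3 : Integrable (fun p : sphere (0:E3) 1 × Set.Ioi (0:ℝ) => f p.2.1)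
      (((volume : Measure E3).toSphere).prod (Measure.volumeIoiPow 2)) := by
    simpa using (integrable_const (1:ℝ)).mul_prod h2
  have hmp := (volume : Measure E3).measurePreserving_homeomorphUnitSphereProd
  rw [hdim] at hmp
  have h5 : Integrable ((fun p : sphere (0:E3) 1 × Set.Ioi (0:ℝ) => f p.2.1)
      ∘ (homeomorphUnitSphereProd E3)) ((volume : Measure E3).comap Subtype.val) :=
    (hmp.integrable_comp_emb (Homeomorph.measurableEmbedding _)).2 h3
  have h6 : Integrable (fun x : E3 => f ‖x‖) ((volume : Measure E3).restrict {(0:E3)}ᶜ) := by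
    rw [← map_comap_subtype_coe (measurableSet_singleton (0:E3)).compl]
    refine ((MeasurableEmbedding.subtype_coe (measurableSet_singleton (0:E3)).compl
      ).integrable_map_iff).2 ?_
    convert h5 using 1
    funext x
    simp [homeomorphUnitSphereProd]
  rwa [MeasureTheory.restrict_compl_singleton] at h6

/-- Integrability and value of `∫_{‖y‖<R} ‖y‖^{-2-τ}` in `ℝ³`. -/
lemma aux_ball (τ R : ℝ) (hτ0 : 0 < τ) (hτ1 : τ < 1) (hR : 0 < R) :
    IntegrableOn (fun y : E3 => ‖y‖ ^ (-2 - τ)) (ball (0:E3) R) ∧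
    ∫ y in ball (0:E3) R, ‖y‖ ^ (-2 - τ) =
      3 * (volume (ball (0:E3) 1)).toReal * (R ^ (1 - τ) / (1 - τ)) := by
  set f : ℝ → ℝ := Set.indicator (Set.Ioo 0 R) (fun t => t ^ (-2 - τ)) with hf
  have hfx : (fun x : E3 => f ‖x‖)
      = (ball (0:E3) R).indicator (fun y : E3 => ‖y‖ ^ (-2 - τ)) := by
    funext x
    by_cases hx : ‖x‖ < R
    · have hxb : x ∈ ball (0:E3) R := mem_ball_zero_iff.2 hx
      rw [Set.indicator_of_mem hxb]
      rcases eq_or_ne x 0 with rfl | h0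
      · rw [hf, norm_zero, Set.indicator_of_notMem (by simp : (0:ℝ) ∉ Set.Ioo 0 R),
          Real.zero_rpow (by linarith)]
      · rw [hf, Set.indicator_of_mem (Set.mem_Ioo.mpr ⟨norm_pos_iff.2 h0, hx⟩)]
    · rw [Set.indicator_of_notMem (by simpa [mem_ball_zero_iff] using hx),
        hf, Set.indicator_of_notMem (fun h => hx h.2)]
  have hf1 : (fun r : ℝ => r ^ 2 * f r)
      = Set.indicator (Set.Ioo 0 R) (fun t : ℝ => t ^ (-τ)) := by
    funext r
    by_cases hr : r ∈ Set.Ioo (0:ℝ) R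
    · rw [hf, Set.indicator_of_mem hr, Set.indicator_of_mem hr,
        ← Real.rpow_natCast r 2, ← Real.rpow_add hr.1]
      norm_num
      congr 1
      ring
    · rw [hf, Set.indicator_of_notMem hr, Set.indicator_of_notMem hr, mul_zero]
  have hIoo : IntegrableOn (fun t : ℝ => t ^ (-τ)) (Set.Ioo 0 R) := by
    have h1 := intervalIntegrable_rpow' (a := 0) (b := R) (r := -τ)
      (by linarith)
    exact ((intervalIntegrable_iff_integrableOn_Ioc_of_le hR.le).1 h1).mono_set
      Set.Ioo_subset_Ioc_self
  have hint : IntegrableOn (fun r : ℝ => r ^ 2 * f r) (Set.Ioi (0:ℝ)) := by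
    rw [hf1, IntegrableOn, integrable_indicator_iff measurableSet_Ioo, IntegrableOn,
      Measure.restrict_restrict measurableSet_Ioo,
      Set.inter_eq_self_of_subset_left (fun t ht => ht.1)]
    exact hIoo
  constructor
  · have h2 := aux_integrable_comp_norm f hint
    rw [hfx] at h2
    exact (integrable_indicator_iff measurableSet_ball).1 h2
  · have hval := MeasureTheory.integral_fun_norm_addHaar (volume : Measure E3) f
    rw [hfx, MeasureTheory.integral_indicator measurableSet_ball] at hval
    rw [hval, finrank_euclideanSpace_fin]
    have h3 : ∫ y in Set.Ioi (0:ℝ), y ^ (3 - 1) • f y = R ^ (1 - τ) / (1 - τ) := by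
      simp only [smul_eq_mul]
      have : (fun y : ℝ => y ^ (3 - 1) * f y) = (fun y : ℝ => y ^ 2 * f y) := rfl
      rw [this, hf1, setIntegral_indicator measurableSet_Ioo,
        Set.inter_eq_self_of_subset_right (fun t ht => ht.1),
        Measure.restrict_congr_set Ioo_ae_eq_Ioc, ← integral_of_le hR.le,
        integral_rpow (Or.inl (by linarith)),
        Real.zero_rpow (by linarith : -τ + 1 ≠ 0), show -τ + 1 = 1 - τ by ring]
      ring
    rw [h3, nsmul_eq_mul, smul_eq_mul]
    push_cast
    rw [measureReal_def]
    ring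

/-- For every `τ ∈ (0, 1)` there is `C > 0` such that for every
`x ∈ ℝ³` with `‖x‖ ≥ 1`,
`∫_{‖y‖ < ‖x‖/2} |1/‖x‖ − 1/‖x − y‖| (1 + ‖y‖)^{-3-τ} dy ≤ C ‖x‖^{-1-τ}`. -/
theorem third_integral_decay (τ : ℝ) (hτ : τ ∈ Set.Ioo (0 : ℝ) 1) :
    ∃ C > (0 : ℝ), ∀ x : EuclideanSpace ℝ (Fin 3), 1 ≤ ‖x‖ →
      (∫ y in {y : EuclideanSpace ℝ (Fin 3) | ‖y‖ < ‖x‖ / 2},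
          |1 / ‖x‖ - 1 / ‖x - y‖| * (1 + ‖y‖) ^ (-3 - τ))
        ≤ C * ‖x‖ ^ (-1 - τ) := by
  obtain ⟨hτ0, hτ1⟩ := hτ
  set v : ℝ := (volume (ball (0:E3) 1)).toReal with hv
  have hv0 : 0 < v := ENNReal.toReal_pos (measure_ball_pos volume 0 one_pos).ne'
    measure_ball_lt_top.ne
  have h1τ : (0:ℝ) < 1 - τ := by linarith
  have hC0 : (0:ℝ) < 6 * v / (1 - τ) := by positivity
  refine ⟨6 * v / (1 - τ), hC0, fun x hx => ?_⟩
  have hx0 : (0:ℝ) < ‖x‖ := lt_of_lt_of_le one_pos hx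
  have hR : (0:ℝ) < ‖x‖ / 2 := by linarith
  have hset : {y : E3 | ‖y‖ < ‖x‖ / 2} = ball (0:E3) (‖x‖ / 2) := by
    ext y; simp [mem_ball_zero_iff]
  obtain ⟨hbint, hbval⟩ := aux_ball τ (‖x‖ / 2) hτ0 hτ1 hR
  -- pointwise bound
  have hpt : ∀ y ∈ ball (0:E3) (‖x‖ / 2),
      |1 / ‖x‖ - 1 / ‖x - y‖| * (1 + ‖y‖) ^ (-3 - τ)
        ≤ 2 / ‖x‖ ^ 2 * ‖y‖ ^ (-2 - τ) := by
    intro y hy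
    rw [mem_ball_zero_iff] at hy
    rcases eq_or_ne y 0 with rfl | hy0
    · simp only [sub_zero, sub_self, abs_zero, zero_mul]
      positivity
    · have hny : 0 < ‖y‖ := norm_pos_iff.2 hy0
      have hxy : ‖x‖ / 2 ≤ ‖x - y‖ := by
        have h := norm_sub_norm_le x y
        linarith
      have hxy0 : (0:ℝ) < ‖x - y‖ := lt_of_lt_of_le hR hxy
      have h1 : |1 / ‖x‖ - 1 / ‖x - y‖| ≤ 2 * ‖y‖ / ‖x‖ ^ 2 := by
        have he : 1 / ‖x‖ - 1 / ‖x - y‖ = (‖x - y‖ - ‖x‖) / (‖x‖ * ‖x - y‖) := by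
          field_simp
        rw [he, abs_div, abs_of_pos (by positivity : (0:ℝ) < ‖x‖ * ‖x - y‖)]
        have h2 : |‖x - y‖ - ‖x‖| ≤ ‖y‖ := by
          have h3 := abs_norm_sub_norm_le (x - y) x
          simpa using h3
        calc |‖x - y‖ - ‖x‖| / (‖x‖ * ‖x - y‖)
            ≤ ‖y‖ / (‖x‖ * (‖x‖ / 2)) :=
              div_le_div₀ (norm_nonneg y) h2 (by positivity)
                (mul_le_mul_of_nonneg_left hxy hx0.le)
          _ = 2 * ‖y‖ / ‖x‖ ^ 2 := by
              field_simp
      have h2 : (1 + ‖y‖) ^ (-3 - τ) ≤ ‖y‖ ^ (-3 - τ) :=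
        Real.rpow_le_rpow_of_nonpos hny (by linarith) (by linarith)
      calc |1 / ‖x‖ - 1 / ‖x - y‖| * (1 + ‖y‖) ^ (-3 - τ)
          ≤ 2 * ‖y‖ / ‖x‖ ^ 2 * (‖y‖ ^ (-3 - τ)) :=
            mul_le_mul h1 h2 (Real.rpow_nonneg (by positivity) _) (by positivity)
        _ = 2 / ‖x‖ ^ 2 * ‖y‖ ^ (-2 - τ) := by
            rw [show (-2 - τ) = 1 + (-3 - τ) by ring, Real.rpow_add hny, Real.rpow_one]
            ring
  have hgint : Integrable (fun y : E3 => 2 / ‖x‖ ^ 2 * ‖y‖ ^ (-2 - τ))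
      (volume.restrict (ball (0:E3) (‖x‖ / 2))) := hbint.const_mul _
  have hmono : (∫ y in ball (0:E3) (‖x‖ / 2),
      |1 / ‖x‖ - 1 / ‖x - y‖| * (1 + ‖y‖) ^ (-3 - τ))
      ≤ ∫ y in ball (0:E3) (‖x‖ / 2), 2 / ‖x‖ ^ 2 * ‖y‖ ^ (-2 - τ) := by
    refine integral_mono_of_nonneg (Filter.Eventually.of_forall fun y => by positivity)
      hgint ?_
    exact (ae_restrict_iff' measurableSet_ball).2 (Filter.Eventually.of_forall hpt)
  have hpow : ‖x‖ ^ (-1 - τ) = ‖x‖ ^ (1 - τ) / ‖x‖ ^ 2 := by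
    rw [eq_div_iff (by positivity : (‖x‖:ℝ) ^ 2 ≠ 0), ← Real.rpow_natCast ‖x‖ 2,
      ← Real.rpow_add hx0]
    norm_num
    congr 1
    ring
  have hRle : (‖x‖ / 2) ^ (1 - τ) ≤ ‖x‖ ^ (1 - τ) :=
    Real.rpow_le_rpow hR.le (by linarith) (by linarith)
  calc (∫ y in {y : E3 | ‖y‖ < ‖x‖ / 2},
          |1 / ‖x‖ - 1 / ‖x - y‖| * (1 + ‖y‖) ^ (-3 - τ))
      = ∫ y in ball (0:E3) (‖x‖ / 2),
          |1 / ‖x‖ - 1 / ‖x - y‖| * (1 + ‖y‖) ^ (-3 - τ) := by rw [hset]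
    _ ≤ ∫ y in ball (0:E3) (‖x‖ / 2), 2 / ‖x‖ ^ 2 * ‖y‖ ^ (-2 - τ) := hmono
    _ = 2 / ‖x‖ ^ 2 * ∫ y in ball (0:E3) (‖x‖ / 2), ‖y‖ ^ (-2 - τ) :=
        integral_const_mul _ _
    _ = 6 * v / (1 - τ) * ((‖x‖ / 2) ^ (1 - τ)) / ‖x‖ ^ 2 := by
        rw [hbval]
        field_simp
        ring
    _ ≤ 6 * v / (1 - τ) * (‖x‖ ^ (1 - τ)) / ‖x‖ ^ 2 :=
        ((div_le_div_iff_of_pos_right (by positivity : (0:ℝ) < ‖x‖ ^ 2)).2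
          (mul_le_mul_of_nonneg_left hRle hC0.le))
    _ = 6 * v / (1 - τ) * ‖x‖ ^ (-1 - τ) := by rw [hpow]; ring
end

section
/- For every τ > 0 there exists a constant C > 0 such that for every x ∈ E with ‖x‖ ≥ 1, the Lebesgue integral over the region {y ∈ E : ‖y − x‖ ≥ ‖x‖/2 and ‖y‖ ≥ ‖x‖/2} of (1 + ‖y‖)^{−3−τ} / ‖x − y‖ dy is at most C · ‖x‖^{−1−τ}. -/
open MeasureTheory

section Aux

local notation "E3" => EuclideanSpace ℝ (Fin 3)

lemma aux_u_integrable (τ : ℝ) (hτ : 0 < τ) :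
    Integrable (fun y : E3 => (1 + ‖y‖) ^ (-3 - τ)) := by
  have h : (-3 - τ : ℝ) = -(3 + τ) := by ring
  rw [h]
  apply integrable_one_add_norm (E := E3)
  simp only [finrank_euclideanSpace_fin]
  push_cast
  linarith

lemma aux_g_meas (τ : ℝ) :
    Measurable (fun z : E3 => if 1 ≤ ‖z‖ then ‖z‖ ^ (-3 - τ) else 0) := by
  exact Measurable.ite (measurableSet_le measurable_const measurable_norm)
    (measurable_norm.pow_const (-3 - τ) |>.comp measurable_id) measurable_const

lemma aux_g_integrable (τ : ℝ) (hτ : 0 < τ) :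
    Integrable (fun z : E3 => if 1 ≤ ‖z‖ then ‖z‖ ^ (-3 - τ) else 0) := by
  have hmeas := aux_g_meas τ
  have hbound : Integrable (fun z : E3 => (2 : ℝ) ^ (3 + τ) * (1 + ‖z‖) ^ (-3 - τ)) :=
    (aux_u_integrable τ hτ).const_mul _
  refine hbound.mono' hmeas.aestronglyMeasurable (Filter.Eventually.of_forall fun z => ?_)
  by_cases hz : 1 ≤ ‖z‖
  · simp only [hz, if_pos]
    rw [Real.norm_of_nonneg (by positivity)]
    have h1 : (1 + ‖z‖) / 2 ≤ ‖z‖ := by linarith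
    have h2 : (0 : ℝ) < (1 + ‖z‖) / 2 := by positivity
    have h3 : ‖z‖ ^ (-3 - τ) ≤ ((1 + ‖z‖) / 2) ^ (-3 - τ) :=
      Real.rpow_le_rpow_of_nonpos h2 h1 (by linarith)
    refine h3.trans_eq ?_
    rw [Real.div_rpow (by positivity) (by norm_num)]
    rw [show (-3 - τ : ℝ) = -(3 + τ) by ring, Real.rpow_neg (by norm_num : (0:ℝ) ≤ 2)]
    field_simp
  · simp only [hz, if_neg, not_false_iff, norm_zero]
    positivity

end Aux

/-- For every `τ > 0` there is `C > 0` such that for every `x ∈ ℝ³`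
with `‖x‖ ≥ 1`,
`∫_{‖y − x‖ ≥ ‖x‖/2, ‖y‖ ≥ ‖x‖/2} (1 + ‖y‖)^{-3-τ} / ‖x − y‖ dy ≤ C ‖x‖^{-1-τ}`. -/
theorem fifth_integral_decay (τ : ℝ) (hτ : 0 < τ) :
    ∃ C > (0 : ℝ), ∀ x : EuclideanSpace ℝ (Fin 3), 1 ≤ ‖x‖ →
      (∫ y in {y : EuclideanSpace ℝ (Fin 3) | ‖x‖ / 2 ≤ ‖y - x‖ ∧ ‖x‖ / 2 ≤ ‖y‖},
          (1 + ‖y‖) ^ (-3 - τ) / ‖x - y‖)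
        ≤ C * ‖x‖ ^ (-1 - τ) := by
  classical
  set g : EuclideanSpace ℝ (Fin 3) → ℝ :=
    fun z => if 1 ≤ ‖z‖ then ‖z‖ ^ (-3 - τ) else 0 with hg_def
  set I : ℝ := ∫ z, g z with hI_def
  have hI_nonneg : 0 ≤ I := integral_nonneg fun z => by
    simp only [hg_def]; split <;> positivity
  refine ⟨2 ^ (1 + τ) * (I + 1), by positivity, fun x hx => ?_⟩
  have hx0 : (0 : ℝ) < ‖x‖ := lt_of_lt_of_le one_pos hx
  set R : ℝ := ‖x‖ / 2 with hR_def
  have hR0 : 0 < R := by positivity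
  set S : Set (EuclideanSpace ℝ (Fin 3)) :=
    {y | ‖x‖ / 2 ≤ ‖y - x‖ ∧ ‖x‖ / 2 ≤ ‖y‖} with hS_def
  set T : Set (EuclideanSpace ℝ (Fin 3)) := {y | R ≤ ‖y‖} with hT_def
  have hT : MeasurableSet T := measurableSet_le measurable_const measurable_norm
  have hS : MeasurableSet S := by
    have : S = {y : EuclideanSpace ℝ (Fin 3) | ‖x‖ / 2 ≤ ‖y - x‖} ∩
        {y : EuclideanSpace ℝ (Fin 3) | ‖x‖ / 2 ≤ ‖y‖} := rfl
    rw [this]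
    exact (measurableSet_le measurable_const
      ((measurable_id.sub_const x).norm)).inter
      (measurableSet_le measurable_const measurable_norm)
  have hu_int := aux_u_integrable τ hτ
  have hg_int : Integrable g := aux_g_integrable τ hτ
  -- the scaled indicator identity
  have hkey : Set.indicator T (fun z => ‖z‖ ^ (-3 - τ))
      = fun z => R ^ (-(3 + τ)) * g (R⁻¹ • z) := by
    funext z
    have hnorm : ‖R⁻¹ • z‖ = R⁻¹ * ‖z‖ := by
      rw [norm_smul, Real.norm_eq_abs, abs_of_pos (by positivity)]
    have hcond : (1 ≤ ‖R⁻¹ • z‖) ↔ R ≤ ‖z‖ := by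
      rw [hnorm, le_inv_mul_iff₀ hR0, mul_one]
    by_cases hz : R ≤ ‖z‖
    · have hzT : z ∈ T := hz
      rw [Set.indicator_of_mem hzT]
      have hinv : (R⁻¹ : ℝ) ^ (-3 - τ) = R ^ (3 + τ) := by
        rw [Real.inv_rpow hR0.le, ← Real.rpow_neg hR0.le]
        congr 1; ring
      simp only [hg_def]
      rw [if_pos (hcond.mpr hz), hnorm,
        Real.mul_rpow (by positivity) (norm_nonneg z),
        hinv, ← mul_assoc, ← Real.rpow_add hR0,
        show (-(3 + τ) + (3 + τ) : ℝ) = 0 by ring, Real.rpow_zero, one_mul]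
    · have hzT : z ∉ T := hz
      rw [Set.indicator_of_notMem hzT]
      simp only [hg_def, hcond, hz, if_neg, not_false_iff, mul_zero]
  -- integrability of the scaled function
  have hgs_int : Integrable (fun z => R ^ (-(3 + τ)) * g (R⁻¹ • z)) :=
    (hg_int.comp_smul (inv_ne_zero hR0.ne')).const_mul _
  have hv_intOn : IntegrableOn (fun z : EuclideanSpace ℝ (Fin 3) => ‖z‖ ^ (-3 - τ)) T := by
    rw [← integrable_indicator_iff hT, hkey]; exact hgs_int
  -- value of the tail integral
  have hval : (∫ z in T, ‖z‖ ^ (-3 - τ)) = R ^ (-τ) * I := by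
    rw [← integral_indicator hT, hkey, integral_const_mul,
      Measure.integral_comp_inv_smul_of_nonneg volume g hR0.le]
    rw [finrank_euclideanSpace_fin, smul_eq_mul, ← mul_assoc]
    congr 1
    rw [← Real.rpow_natCast R 3, ← Real.rpow_add hR0]
    norm_num
  -- pointwise bound on S
  have hS_sub_T : S ⊆ T := fun y hy => hy.2
  have step1 : (∫ y in S, (1 + ‖y‖) ^ (-3 - τ) / ‖x - y‖)
      ≤ ∫ y in S, (2 / ‖x‖) * (1 + ‖y‖) ^ (-3 - τ) := by
    refine integral_mono_of_nonneg (Filter.Eventually.of_forall fun y => by positivity)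
      ((hu_int.const_mul _).restrict) ?_
    refine (ae_restrict_iff' hS).2 (Filter.Eventually.of_forall fun y hy => ?_)
    have hxy : ‖x‖ / 2 ≤ ‖x - y‖ := by
      rw [norm_sub_rev]; exact hy.1
    have h1 : (0 : ℝ) ≤ (1 + ‖y‖) ^ (-3 - τ) := by positivity
    calc (1 + ‖y‖) ^ (-3 - τ) / ‖x - y‖
        ≤ (1 + ‖y‖) ^ (-3 - τ) / (‖x‖ / 2) :=
          div_le_div_of_nonneg_left h1 (by positivity) hxy
      _ = 2 / ‖x‖ * (1 + ‖y‖) ^ (-3 - τ) := by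
          field_simp
  have step2 : (∫ y in S, (2 / ‖x‖) * (1 + ‖y‖) ^ (-3 - τ))
      ≤ ∫ y in T, (2 / ‖x‖) * (1 + ‖y‖) ^ (-3 - τ) := by
    refine setIntegral_mono_set ((hu_int.const_mul _).integrableOn)
      (Filter.Eventually.of_forall fun y => by positivity)
      (HasSubset.Subset.eventuallyLE hS_sub_T)
  have step3 : (∫ y in T, (2 / ‖x‖) * (1 + ‖y‖) ^ (-3 - τ))
      ≤ (2 / ‖x‖) * (R ^ (-τ) * I) := by
    rw [integral_const_mul, ← hval]
    have hmono : (∫ y in T, (1 + ‖y‖) ^ (-3 - τ)) ≤ ∫ z in T, ‖z‖ ^ (-3 - τ) := by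
      refine setIntegral_mono_on hu_int.integrableOn hv_intOn hT fun y hy => ?_
      have hy0 : (0 : ℝ) < ‖y‖ := lt_of_lt_of_le hR0 hy
      exact Real.rpow_le_rpow_of_nonpos hy0 (by linarith) (by linarith)
    have h2x : (0 : ℝ) ≤ 2 / ‖x‖ := by positivity
    exact mul_le_mul_of_nonneg_left hmono h2x
  -- put everything together
  have hRτ : R ^ (-τ) = 2 ^ τ * ‖x‖ ^ (-τ) := by
    rw [hR_def, Real.div_rpow hx0.le (by norm_num : (0:ℝ) ≤ 2),
      Real.rpow_neg hx0.le, Real.rpow_neg (by norm_num : (0:ℝ) ≤ 2)]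
    field_simp
  have hfinal : (2 / ‖x‖) * (R ^ (-τ) * I) ≤ 2 ^ (1 + τ) * (I + 1) * ‖x‖ ^ (-1 - τ) := by
    rw [hRτ, show (-1 - τ : ℝ) = (-1) + (-τ) by ring, Real.rpow_add hx0,
      Real.rpow_neg_one, Real.rpow_add (by norm_num : (0:ℝ) < 2), Real.rpow_one]
    have h1 : (2 / ‖x‖) * (2 ^ τ * ‖x‖ ^ (-τ) * I) = (2 * 2 ^ τ * I) * (‖x‖⁻¹ * ‖x‖ ^ (-τ)) := by
      field_simp
    rw [h1]
    have h2 : (2 * 2 ^ τ * I : ℝ) ≤ 2 * 2 ^ τ * (I + 1) := by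
      have : (0:ℝ) < 2 * 2 ^ τ := by positivity
      nlinarith
    exact mul_le_mul_of_nonneg_right h2 (by positivity)
  linarith [step1, step2, step3]
end

section
/- Let τ ∈ (1/2, 1) and ε ∈ (0, τ). Let a : E → Matrix (Fin 3) (Fin 3) ℝ and b : E → E, and suppose there exist C₀ > 0 and R₀ ≥ 1 such that for all x with ‖x‖ ≥ R₀ one has |aᵢⱼ(x) − δᵢⱼ| ≤ C₀ ‖x‖^{−τ} for all i, j and ‖b(x)‖ ≤ C₀ ‖x‖^{−1−τ}. Define φ₊ : E ∖ {0} → ℝ by φ₊(x) = ‖x‖^{−1} − ‖x‖^{−1−ε}, and for x ≠ 0 set (Lφ₊)(x) = ∑_{i,j} aᵢⱼ(x) ∂ᵢ∂ⱼφ₊(x) + ∑_k bₖ(x) ∂ₖφ₊(x). Then there exist C > 0 and R ≥ R₀ such that for all x with ‖x‖ ≥ R: (i) |(Lφ₊)(x) + ε(1+ε)‖x‖^{−3−ε}| ≤ C ‖x‖^{−3−τ}; (ii) (Lφ₊)(x) < 0; and (iii) φ₊(x) > 0. -/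
noncomputable section

open Finset Real

local notation "E3" => EuclideanSpace ℝ (Fin 3)

/-- The partial derivative of `f : ℝ³ → ℝ` at `x` in the `k`-th standard
coordinate direction. -/
def pderiv3 (f : EuclideanSpace ℝ (Fin 3) → ℝ) (k : Fin 3)
    (x : EuclideanSpace ℝ (Fin 3)) : ℝ :=
  fderiv ℝ f x (EuclideanSpace.single k 1)

/-- The barrier function `φ₊(x) = ‖x‖^{-1} − ‖x‖^{-1-ε}`. -/
def phiPlus (ε : ℝ) (x : EuclideanSpace ℝ (Fin 3)) : ℝ :=
  ‖x‖ ^ (-1 : ℝ) - ‖x‖ ^ (-1 - ε)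

/-- The drift operator `(Lφ)(x) = ∑ᵢⱼ aᵢⱼ(x) ∂ᵢ∂ⱼφ(x) + ∑ₖ bₖ(x) ∂ₖφ(x)`. -/
def driftOp (a : EuclideanSpace ℝ (Fin 3) → Matrix (Fin 3) (Fin 3) ℝ)
    (b : EuclideanSpace ℝ (Fin 3) → EuclideanSpace ℝ (Fin 3))
    (φ : EuclideanSpace ℝ (Fin 3) → ℝ) (x : EuclideanSpace ℝ (Fin 3)) : ℝ :=
  (∑ i : Fin 3, ∑ j : Fin 3, a x i j * pderiv3 (pderiv3 φ j) i x)
    + ∑ k : Fin 3, b x k * pderiv3 φ k x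

def qE (x : E3) : ℝ := inner ℝ x x

lemma qE_eq (x : E3) : qE x = ‖x‖ ^ (2:ℝ) := by
  rw [qE, real_inner_self_eq_norm_sq, ← Real.rpow_natCast]; norm_num

lemma qE_pos {x : E3} (hx : x ≠ 0) : 0 < qE x := by
  rw [qE_eq]; exact Real.rpow_pos_of_pos (norm_pos_iff.2 hx) _

lemma hasFDerivAt_qE (x : E3) : HasFDerivAt qE ((2:ℝ) • (innerSL ℝ x : E3 →L[ℝ] ℝ)) x := by
  refine ((hasFDerivAt_id x).inner ℝ (hasFDerivAt_id x)).congr_fderiv ?_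
  ext v
  simp [fderivInnerCLM_apply, real_inner_comm, two_mul, mul_comm]

lemma hasFDerivAt_qpow {x : E3} (hx : x ≠ 0) (p : ℝ) :
    HasFDerivAt (fun y => qE y ^ p)
      ((p * qE x ^ (p - 1)) • ((2:ℝ) • (innerSL ℝ x : E3 →L[ℝ] ℝ))) x :=
  (hasFDerivAt_qE x).rpow_const (Or.inl (qE_pos hx).ne')

lemma pderiv3_phi (pa pb : ℝ) {x : E3} (hx : x ≠ 0) (k : Fin 3) :
    pderiv3 (fun y => qE y ^ pa - qE y ^ pb) k x
      = (2*pa*qE x^(pa-1)) * x k - (2*pb*qE x^(pb-1)) * x k := by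
  have h := (hasFDerivAt_qpow hx pa).sub (hasFDerivAt_qpow hx pb)
  rw [pderiv3, (show HasFDerivAt (fun y => qE y ^ pa - qE y ^ pb) _ x from h).fderiv]
  simp [EuclideanSpace.inner_single_right]
  ring

lemma pderiv3_phi2 (pa pb : ℝ) {x : E3} (hx : x ≠ 0) (i j : Fin 3) :
    pderiv3 (pderiv3 (fun y => qE y ^ pa - qE y ^ pb) j) i x =
      ((4*pa*(pa-1)*qE x^(pa-2)*(x i*x j) + 2*pa*qE x^(pa-1)*(if i = j then 1 else 0))
      - (4*pb*(pb-1)*qE x^(pb-2)*(x i*x j) + 2*pb*qE x^(pb-1)*(if i = j then 1 else 0))) := by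
  have hev : pderiv3 (fun y => qE y ^ pa - qE y ^ pb) j =ᶠ[nhds x]
      fun y => (2*pa*qE y^(pa-1)) * y j - (2*pb*qE y^(pb-1)) * y j := by
    filter_upwards [eventually_ne_nhds hx] with y hy
    exact pderiv3_phi pa pb hy j
  have h1 : HasFDerivAt (fun y : E3 => (2*pa*qE y^(pa-1)) * y j)
      ((2*pa*qE x^(pa-1)) • (EuclideanSpace.proj j : E3 →L[ℝ] ℝ)
        + (x j) • ((2*pa) • (((pa-1) * qE x ^ (pa-1-1)) • ((2:ℝ) • (innerSL ℝ x : E3 →L[ℝ] ℝ))))) x := by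
    have := (((hasFDerivAt_qpow hx (pa-1)).const_mul (2*pa)).mul
      ((EuclideanSpace.proj j : E3 →L[ℝ] ℝ).hasFDerivAt))
    exact this
  have h2 : HasFDerivAt (fun y : E3 => (2*pb*qE y^(pb-1)) * y j)
      ((2*pb*qE x^(pb-1)) • (EuclideanSpace.proj j : E3 →L[ℝ] ℝ)
        + (x j) • ((2*pb) • (((pb-1) * qE x ^ (pb-1-1)) • ((2:ℝ) • (innerSL ℝ x : E3 →L[ℝ] ℝ))))) x := by
    have := (((hasFDerivAt_qpow hx (pb-1)).const_mul (2*pb)).mul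
      ((EuclideanSpace.proj j : E3 →L[ℝ] ℝ).hasFDerivAt))
    exact this
  rw [pderiv3, hev.fderiv_eq, (show HasFDerivAt (fun y : E3 => (2*pa*qE y^(pa-1)) * y j - (2*pb*qE y^(pb-1)) * y j) _ x from h1.sub h2).fderiv]
  have e1 : pa - 1 - 1 = pa - 2 := by ring
  have e2 : pb - 1 - 1 = pb - 2 := by ring
  simp [EuclideanSpace.inner_single_right, EuclideanSpace.single_apply, e1, e2, eq_comm]
  by_cases h : i = j <;> simp [h] <;> ring

lemma qE_rpow (x : E3) (s : ℝ) : qE x ^ s = ‖x‖ ^ (2*s) := by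
  rw [qE_eq, ← Real.rpow_mul (norm_nonneg x)]

lemma phiPlus_eq (ε : ℝ) :
    phiPlus ε = fun y => qE y ^ ((-1:ℝ)/2) - qE y ^ ((-1-ε)/2) := by
  funext y
  rw [phiPlus, qE_rpow, qE_rpow]
  norm_num
  have h2 : 2 * ((-1-ε)/2) = -1-ε := by ring
  rw [h2]

lemma coord_le_norm (x : E3) (k : Fin 3) : |x k| ≤ ‖x‖ := by
  rw [EuclideanSpace.norm_eq]
  calc |x k| = Real.sqrt (‖x k‖ ^ 2) := by
        rw [Real.sqrt_sq_eq_abs, Real.norm_eq_abs, abs_abs]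
    _ ≤ _ := Real.sqrt_le_sqrt (Finset.single_le_sum
        (f := fun i => ‖x i‖ ^ 2) (fun i _ => sq_nonneg _) (Finset.mem_univ k))

lemma sum_sq_eq (x : E3) : x 0 * x 0 + x 1 * x 1 + x 2 * x 2 = ‖x‖ ^ (2:ℝ) := by
  have : qE x = ∑ i : Fin 3, x i * x i := by
    simp only [qE, PiLp.inner_apply, RCLike.inner_apply, conj_trivial]
  rw [← qE_eq, this, Fin.sum_univ_three]

lemma phiPlus_pderiv1 (ε : ℝ) {x : E3} (hx : x ≠ 0) (k : Fin 3) :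
    pderiv3 (phiPlus ε) k x
      = (-‖x‖^(-3:ℝ) + (1+ε)*‖x‖^(-3-ε)) * x k := by
  rw [phiPlus_eq, pderiv3_phi _ _ hx, qE_rpow, qE_rpow]
  have e2 : 2*((-1:ℝ)/2 - 1) = -3 := by ring
  have e4 : 2*((-1-ε)/2 - 1) = -3-ε := by ring
  rw [e2, e4]; ring

lemma phiPlus_pderiv2 (ε : ℝ) {x : E3} (hx : x ≠ 0) (i j : Fin 3) :
    pderiv3 (pderiv3 (phiPlus ε) j) i x =
      (3*‖x‖^(-5:ℝ) - (1+ε)*(3+ε)*‖x‖^(-5-ε))*(x i*x j)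
      + (-‖x‖^(-3:ℝ) + (1+ε)*‖x‖^(-3-ε))*(if i = j then 1 else 0) := by
  rw [phiPlus_eq, pderiv3_phi2 _ _ hx, qE_rpow, qE_rpow, qE_rpow, qE_rpow]
  have e1 : 2*((-1:ℝ)/2 - 2) = -5 := by ring
  have e2 : 2*((-1:ℝ)/2 - 1) = -3 := by ring
  have e3 : 2*((-1-ε)/2 - 2) = -5-ε := by ring
  have e4 : 2*((-1-ε)/2 - 1) = -3-ε := by ring
  rw [e1, e2, e3, e4]; ring

set_option maxHeartbeats 2000000 in
/-- In an asymptotically flat chart of order `τ ∈ (1/2,1)` with an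
admissible drift, the function `φ₊ = ‖x‖^{-1} − ‖x‖^{-1-ε}` (with `0 < ε < τ`) is a
positive strict supersolution of the drift operator outside a large ball, with
`Lφ₊ = −ε(1+ε)‖x‖^{-3-ε} + O(‖x‖^{-3-τ})`. -/
theorem barrier_supersolution (τ ε : ℝ) (hτ : τ ∈ Set.Ioo (1/2 : ℝ) 1)
    (hε : ε ∈ Set.Ioo (0 : ℝ) τ)
    (a : EuclideanSpace ℝ (Fin 3) → Matrix (Fin 3) (Fin 3) ℝ)
    (b : EuclideanSpace ℝ (Fin 3) → EuclideanSpace ℝ (Fin 3))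
    (C₀ R₀ : ℝ) (hC₀ : 0 < C₀) (hR₀ : 1 ≤ R₀)
    (ha : ∀ x : EuclideanSpace ℝ (Fin 3), R₀ ≤ ‖x‖ → ∀ i j : Fin 3,
      |a x i j - (if i = j then 1 else 0)| ≤ C₀ * ‖x‖ ^ (-τ))
    (hb : ∀ x : EuclideanSpace ℝ (Fin 3), R₀ ≤ ‖x‖ →
      ‖b x‖ ≤ C₀ * ‖x‖ ^ (-1 - τ)) :
    ∃ C > (0 : ℝ), ∃ R ≥ R₀, ∀ x : EuclideanSpace ℝ (Fin 3), R ≤ ‖x‖ →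
      |driftOp a b (phiPlus ε) x + ε * (1 + ε) * ‖x‖ ^ (-3 - ε)|
          ≤ C * ‖x‖ ^ (-3 - τ) ∧
      driftOp a b (phiPlus ε) x < 0 ∧
      0 < phiPlus ε x := by
  obtain ⟨hτ1, hτ2⟩ := hτ
  obtain ⟨hε0, hετ⟩ := hε
  have hε1 : ε < 1 := hετ.trans hτ2
  have hs : 0 < τ - ε := by linarith
  refine ⟨135*C₀, by positivity,
    max R₀ (max 2 ((max 1 (135*C₀/(ε*(1+ε)))) ^ (τ-ε)⁻¹ + 1)), le_max_left _ _, ?_⟩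
  intro x hx
  have hr2 : 2 ≤ ‖x‖ := le_trans ((le_max_left _ _).trans (le_max_right _ _)) hx
  have hr0 : (0:ℝ) < ‖x‖ := by linarith
  have hr1 : (1:ℝ) < ‖x‖ := by linarith
  have hx0 : x ≠ 0 := norm_pos_iff.mp hr0
  have hxR₀ : R₀ ≤ ‖x‖ := (le_max_left _ _).trans hx
  set A := 3*‖x‖^(-5:ℝ) - (1+ε)*(3+ε)*‖x‖^(-5-ε) with hA
  set B := -‖x‖^(-3:ℝ) + (1+ε)*‖x‖^(-3-ε) with hB
  have hmono : ∀ {s t : ℝ}, s ≤ t → ‖x‖ ^ s ≤ ‖x‖ ^ t :=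
    fun h => Real.rpow_le_rpow_of_exponent_le hr1.le h
  have hpos : ∀ s : ℝ, (0:ℝ) < ‖x‖ ^ s := fun s => Real.rpow_pos_of_pos hr0 s
  have p1 : ‖x‖^(-τ) * ‖x‖^(-3:ℝ) = ‖x‖^(-3-τ) := by
    rw [← Real.rpow_add hr0]; congr 1; ring
  have p2 : ‖x‖^(-1-τ) * ‖x‖^(-2:ℝ) = ‖x‖^(-3-τ) := by
    rw [← Real.rpow_add hr0]; congr 1; ring
  have p3 : ‖x‖^(-3:ℝ) * ‖x‖ = ‖x‖^(-2:ℝ) := by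
    nth_rewrite 2 [← Real.rpow_one ‖x‖]
    rw [← Real.rpow_add hr0]; norm_num
  have p4 : ‖x‖^(-5:ℝ) * ‖x‖^(2:ℝ) = ‖x‖^(-3:ℝ) := by
    rw [← Real.rpow_add hr0]; norm_num
  have p5 : ‖x‖^(-5-ε) * ‖x‖^(2:ℝ) = ‖x‖^(-3-ε) := by
    rw [← Real.rpow_add hr0]; congr 1; ring
  have hrr : ‖x‖ * ‖x‖ = ‖x‖^(2:ℝ) := by
    nth_rewrite 1 [← Real.rpow_one ‖x‖]
    nth_rewrite 2 [← Real.rpow_one ‖x‖]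
    rw [← Real.rpow_add hr0]; norm_num
  have hB3 : |B| ≤ 3 * ‖x‖^(-3:ℝ) := by
    have h1 : ‖x‖^(-3-ε) ≤ ‖x‖^(-3:ℝ) := hmono (by linarith)
    have h2 := hpos (-3-ε)
    have h3 := hpos (-3:ℝ)
    have h10 : (1+ε)*‖x‖^(-3-ε) ≤ 2*‖x‖^(-3:ℝ) :=
      mul_le_mul (by linarith) h1 h2.le (by norm_num)
    have h11 : 0 ≤ (1+ε)*‖x‖^(-3-ε) := mul_nonneg (by linarith) h2.le
    rw [hB, abs_le]; constructor <;> linarith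
  have hA11 : |A| ≤ 11 * ‖x‖^(-5:ℝ) := by
    have h1 : ‖x‖^(-5-ε) ≤ ‖x‖^(-5:ℝ) := hmono (by linarith)
    have h2 := hpos (-5-ε)
    have h3 := hpos (-5:ℝ)
    have h8 : (1+ε)*(3+ε) ≤ 8 := by nlinarith
    have h9 : (0:ℝ) ≤ (1+ε)*(3+ε) := by nlinarith
    have h10 : (1+ε)*(3+ε)*‖x‖^(-5-ε) ≤ 8 * ‖x‖^(-5:ℝ) :=
      mul_le_mul h8 h1 h2.le (by norm_num)
    have h11 : 0 ≤ (1+ε)*(3+ε)*‖x‖^(-5-ε) := mul_nonneg h9 h2.le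
    rw [hA, abs_le]; constructor <;> linarith
  have hHbound : ∀ i j : Fin 3,
      |A*(x i*x j) + B*(if i = j then 1 else 0)| ≤ 14*‖x‖^(-3:ℝ) := by
    intro i j
    have hxi := coord_le_norm x i
    have hxj := coord_le_norm x j
    have h1 : |A*(x i * x j)| ≤ 11 * ‖x‖^(-3:ℝ) := by
      rw [abs_mul, abs_mul]
      calc |A| * (|x i| * |x j|) ≤ (11*‖x‖^(-5:ℝ)) * (‖x‖ * ‖x‖) := by
            apply mul_le_mul hA11 (mul_le_mul hxi hxj (abs_nonneg _) (norm_nonneg _))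
              (by positivity) (by positivity)
        _ = 11 * ‖x‖^(-3:ℝ) := by rw [hrr, mul_assoc, p4]
    have h2 : |B*(if i = j then 1 else 0)| ≤ 3*‖x‖^(-3:ℝ) := by
      by_cases h : i = j
      · simpa [h] using hB3
      · simp [h]
    calc |A*(x i*x j) + B*(if i = j then 1 else 0)|
        ≤ |A*(x i*x j)| + |B*(if i = j then 1 else 0)| := abs_add_le _ _
      _ ≤ 14*‖x‖^(-3:ℝ) := by linarith
  have hGbound : ∀ k : Fin 3, |B * x k| ≤ 3*‖x‖^(-2:ℝ) := by
    intro k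
    rw [abs_mul]
    calc |B| * |x k| ≤ (3*‖x‖^(-3:ℝ))*‖x‖ :=
          mul_le_mul hB3 (coord_le_norm x k) (abs_nonneg _) (by positivity)
      _ = 3*‖x‖^(-2:ℝ) := by rw [mul_assoc, p3]
  have htrace : A*‖x‖^(2:ℝ) + 3*B = -(ε*(1+ε))*‖x‖^(-3-ε) := by
    rw [hA, hB]
    linear_combination 3*p4 - ((1+ε)*(3+ε))*p5
  have hq' := sum_sq_eq x
  have key : driftOp a b (phiPlus ε) x + ε*(1+ε)*‖x‖^(-3-ε)
      = (∑ i : Fin 3, ∑ j : Fin 3, (a x i j - (if i = j then 1 else 0))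
          * (A*(x i*x j) + B*(if i = j then 1 else 0)))
        + ∑ k : Fin 3, b x k * (B * x k) := by
    simp only [driftOp, phiPlus_pderiv2 ε hx0, phiPlus_pderiv1 ε hx0]
    rw [hA, hB]
    simp only [Fin.sum_univ_three]
    norm_num [show (0:Fin 3) ≠ 1 by decide, show (0:Fin 3) ≠ 2 by decide,
      show (1:Fin 3) ≠ 0 by decide, show (1:Fin 3) ≠ 2 by decide,
      show (2:Fin 3) ≠ 0 by decide, show (2:Fin 3) ≠ 1 by decide]
    have e3 : ‖x‖⁻¹ ^ 3 = ‖x‖ ^ (-3:ℝ) := by rw [Real.rpow_neg hr0.le, inv_pow]; norm_cast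
    have e5 : ‖x‖⁻¹ ^ 5 = ‖x‖ ^ (-5:ℝ) := by rw [Real.rpow_neg hr0.le, inv_pow]; norm_cast
    linear_combination (3*‖x‖^(-5:ℝ) - (1+ε)*(3+ε)*‖x‖^(-5-ε)) * hq'
      + 3*p4 - ((1+ε)*(3+ε))*p5 - 3*e3 + 3*(x 0^2+x 1^2+x 2^2)*e5
  have hsum1 : |∑ i : Fin 3, ∑ j : Fin 3, (a x i j - (if i = j then 1 else 0))
      * (A*(x i*x j) + B*(if i = j then 1 else 0))| ≤ 126*C₀*‖x‖^(-3-τ) := by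
    calc |∑ i : Fin 3, ∑ j : Fin 3, (a x i j - (if i = j then 1 else 0))
          * (A*(x i*x j) + B*(if i = j then 1 else 0))|
        ≤ ∑ i : Fin 3, ∑ j : Fin 3, |(a x i j - (if i = j then 1 else 0))
          * (A*(x i*x j) + B*(if i = j then 1 else 0))| := by
          refine (Finset.abs_sum_le_sum_abs _ _).trans (Finset.sum_le_sum fun i _ => ?_)
          exact Finset.abs_sum_le_sum_abs _ _
      _ ≤ ∑ _i : Fin 3, ∑ _j : Fin 3, (C₀*‖x‖^(-τ))*(14*‖x‖^(-3:ℝ)) := by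
          refine Finset.sum_le_sum fun i _ => Finset.sum_le_sum fun j _ => ?_
          rw [abs_mul]
          exact mul_le_mul (ha x hxR₀ i j) (hHbound i j) (abs_nonneg _) (by positivity)
      _ = 126*C₀*(‖x‖^(-τ)*‖x‖^(-3:ℝ)) := by simp [Finset.sum_const]; ring
      _ = 126*C₀*‖x‖^(-3-τ) := by rw [p1]
  have hsum2 : |∑ k : Fin 3, b x k * (B * x k)| ≤ 9*C₀*‖x‖^(-3-τ) := by
    calc |∑ k : Fin 3, b x k * (B * x k)| ≤ ∑ k : Fin 3, |b x k * (B * x k)| :=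
          Finset.abs_sum_le_sum_abs _ _
      _ ≤ ∑ _k : Fin 3, (C₀*‖x‖^(-1-τ))*(3*‖x‖^(-2:ℝ)) := by
          refine Finset.sum_le_sum fun k _ => ?_
          rw [abs_mul]
          exact mul_le_mul ((coord_le_norm (b x) k).trans (hb x hxR₀)) (hGbound k)
            (abs_nonneg _) (by positivity)
      _ = 9*C₀*(‖x‖^(-1-τ)*‖x‖^(-2:ℝ)) := by simp [Finset.sum_const]; ring
      _ = 9*C₀*‖x‖^(-3-τ) := by rw [p2]
  have hi : |driftOp a b (phiPlus ε) x + ε*(1+ε)*‖x‖^(-3-ε)| ≤ 135*C₀ * ‖x‖^(-3-τ) := by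
    rw [key]
    exact (abs_add_le _ _).trans (by linarith)
  have hrs : 135*C₀ * ‖x‖^(-3-τ) < ε*(1+ε)*‖x‖^(-3-ε) := by
    set M := max 1 (135*C₀/(ε*(1+ε))) with hMdef
    have hM1 : (1:ℝ) ≤ M := le_max_left _ _
    have hMp : (0:ℝ) < M := by linarith
    have hrM : M ^ (τ-ε)⁻¹ + 1 ≤ ‖x‖ := le_trans ((le_max_right _ _).trans (le_max_right _ _)) hx
    have h0 : M ^ (τ-ε)⁻¹ < ‖x‖ := by linarith
    have h1 : M < ‖x‖ ^ (τ-ε) := by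
      calc M = (M ^ (τ-ε)⁻¹) ^ (τ-ε) := by
            rw [← Real.rpow_mul hMp.le, inv_mul_cancel₀ hs.ne', Real.rpow_one]
        _ < ‖x‖ ^ (τ-ε) := Real.rpow_lt_rpow (Real.rpow_pos_of_pos hMp _).le h0 hs
    have h2 : 135*C₀/(ε*(1+ε)) ≤ M := le_max_right _ _
    have hεε : (0:ℝ) < ε*(1+ε) := by nlinarith
    have h3 : 135*C₀ < ε*(1+ε) * ‖x‖^(τ-ε) := by
      rw [div_le_iff₀ hεε] at h2
      nlinarith
    have h4 : ‖x‖^(τ-ε) * ‖x‖^(-3-τ) = ‖x‖^(-3-ε) := by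
      rw [← Real.rpow_add hr0]; congr 1; ring
    calc 135*C₀*‖x‖^(-3-τ) < (ε*(1+ε)*‖x‖^(τ-ε)) * ‖x‖^(-3-τ) :=
          mul_lt_mul_of_pos_right h3 (hpos _)
      _ = ε*(1+ε)*‖x‖^(-3-ε) := by rw [mul_assoc, h4]
  refine ⟨hi, ?_, ?_⟩
  · have h5 := (abs_le.1 hi).2
    linarith
  · rw [phiPlus]
    have := Real.rpow_lt_rpow_of_exponent_lt hr1 (show -1-ε < -1 by linarith)
    linarith

end
end

section
/- Let B > 0, τ ∈ (0, 1), C₀ > 0, R₀ > 0, and let u : E → ℝ satisfy |u(x) − 1 + B/‖x‖| ≤ C₀ ‖x‖^{−1−τ} for all x with ‖x‖ ≥ R₀. Then there exist constants C > 0, R₁ ≥ R₀ and T > 0 such that for every t ≥ T and every x ∈ E with ‖x‖ ≥ R₁ and u(x) = 1 − 1/t, one has | ‖x‖ − B t | ≤ C t^{1−τ}. -/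
/-!
On the level set, `B/r − 1/t = O(r^{-1-τ})` with `r = ‖x‖`; multiplying by `rt` gives
`|r − Bt| ≤ C₀ r^{-τ} t`. Once `C₀ r^{-τ} ≤ B/2`, i.e. `r ≥ (2C₀/B)^{1/τ}`, this forces
`r ≥ Bt/2`, and feeding that back into `r^{-τ}` yields `|r − Bt| ≤ C₀ (2/B)^τ t^{1-τ}`.
-/

lemma abs_sub_mul_le_of_abs_div_sub_one_div_le {B r t δ : ℝ} (hr : 0 < r) (ht : 0 < t)
    (h : |B / r - 1 / t| ≤ δ / r) : |r - B * t| ≤ δ * t := by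
  have hrt : r - B * t = -(r * t * (B / r - 1 / t)) := by field_simp; ring
  calc |r - B * t| = r * t * |B / r - 1 / t| := by
        rw [hrt, abs_neg, abs_mul, abs_of_pos (mul_pos hr ht)]
    _ ≤ r * t * (δ / r) := by gcongr
    _ = δ * t := by field_simp

lemma mul_rpow_neg_mul_self {a t : ℝ} (ha : 0 < a) (ht : 0 < t) (τ : ℝ) :
    (a * t) ^ (-τ) * t = a⁻¹ ^ τ * t ^ (1 - τ) := by
  rw [Real.mul_rpow ha.le ht.le, Real.inv_rpow ha.le, ← Real.rpow_neg ha.le,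
    sub_eq_neg_add, Real.rpow_add ht, Real.rpow_one]
  ring

lemma abs_sub_mul_le_rpow_of_abs_div_sub_one_div_le {B C₀ τ r t : ℝ} (hB : 0 < B)
    (hC₀ : 0 < C₀) (hτ : 0 < τ) (ht : 0 < t) (hr : (2 * C₀ / B) ^ τ⁻¹ ≤ r)
    (h : |B / r - 1 / t| ≤ C₀ * r ^ (-1 - τ)) :
    |r - B * t| ≤ C₀ * (2 / B) ^ τ * t ^ (1 - τ) := by
  have hr₀ : 0 < r := lt_of_lt_of_le (by positivity) hr
  have hrτ : 2 * C₀ / B ≤ r ^ τ := (Real.rpow_inv_le_iff_of_pos (by positivity) hr₀.le hτ).mp hr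
  have hsmall : C₀ * r ^ (-τ) ≤ B / 2 := by
    rw [Real.rpow_neg hr₀.le, ← div_eq_mul_inv, div_le_iff₀ (by positivity)]
    rw [div_le_iff₀ hB] at hrτ
    linarith
  have habs : |r - B * t| ≤ C₀ * r ^ (-τ) * t := by
    refine abs_sub_mul_le_of_abs_div_sub_one_div_le hr₀ ht ?_
    rwa [show -1 - τ = -τ - 1 by ring, Real.rpow_sub_one hr₀.ne', ← mul_div_assoc] at h
  have hlow : B / 2 * t ≤ r := by
    nlinarith [(abs_le.mp habs).1, mul_le_mul_of_nonneg_right hsmall ht.le]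
  have hdecay : r ^ (-τ) ≤ (B / 2 * t) ^ (-τ) :=
    Real.rpow_le_rpow_of_nonpos (by positivity) hlow (by linarith)
  calc |r - B * t| ≤ C₀ * r ^ (-τ) * t := habs
    _ ≤ C₀ * (B / 2 * t) ^ (-τ) * t := by gcongr
    _ = C₀ * (2 / B) ^ τ * t ^ (1 - τ) := by
        rw [mul_assoc, mul_rpow_neg_mul_self (by positivity) ht, inv_div, mul_assoc]

theorem level_set_radius_estimate_general (B τ C₀ R₀ : ℝ) (hB : 0 < B)
    (hτ : τ ∈ Set.Ioo (0 : ℝ) 1) (hC₀ : 0 < C₀)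
    (u : EuclideanSpace ℝ (Fin 3) → ℝ)
    (hu : ∀ x : EuclideanSpace ℝ (Fin 3), R₀ ≤ ‖x‖ →
      |u x - 1 + B / ‖x‖| ≤ C₀ * ‖x‖ ^ (-1 - τ)) :
    ∃ C > (0 : ℝ), ∃ R₁ ≥ R₀, ∃ T > (0 : ℝ), ∀ t : ℝ, T ≤ t →
      ∀ x : EuclideanSpace ℝ (Fin 3), R₁ ≤ ‖x‖ → u x = 1 - 1 / t →
        |‖x‖ - B * t| ≤ C * t ^ (1 - τ) := by
  refine ⟨C₀ * (2 / B) ^ τ, by positivity, max R₀ ((2 * C₀ / B) ^ τ⁻¹), le_max_left _ _,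
    1, one_pos, fun t ht x hx hux => ?_⟩
  have hlevel := hu x (le_of_max_le_left hx)
  rw [hux, show 1 - 1 / t - 1 + B / ‖x‖ = B / ‖x‖ - 1 / t by ring] at hlevel
  exact abs_sub_mul_le_rpow_of_abs_div_sub_one_div_le hB hC₀ hτ.1 (by linarith)
    (le_of_max_le_right hx) hlevel

/-- If `u = 1 − B/‖x‖ + O(‖x‖^{-1-τ})` at infinity, then on the level
set `{u = 1 − 1/t}` one has `‖x‖ = Bt + O(t^{1-τ})`. -/
theorem level_set_radius_estimate (B τ C₀ R₀ : ℝ) (hB : 0 < B)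
    (hτ : τ ∈ Set.Ioo (0 : ℝ) 1) (hC₀ : 0 < C₀) (hR₀ : 0 < R₀)
    (u : EuclideanSpace ℝ (Fin 3) → ℝ)
    (hu : ∀ x : EuclideanSpace ℝ (Fin 3), R₀ ≤ ‖x‖ →
      |u x - 1 + B / ‖x‖| ≤ C₀ * ‖x‖ ^ (-1 - τ)) :
    ∃ C > (0 : ℝ), ∃ R₁ ≥ R₀, ∃ T > (0 : ℝ), ∀ t : ℝ, T ≤ t →
      ∀ x : EuclideanSpace ℝ (Fin 3), R₁ ≤ ‖x‖ → u x = 1 - 1 / t →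
        |‖x‖ - B * t| ≤ C * t ^ (1 - τ) :=
  level_set_radius_estimate_general B τ C₀ R₀ hB hτ hC₀ u hu
end

section
/- Let n ≥ 1, let i : Fin n → Fin 3, and define P : E ∖ {0} → ℝ by P(x) = (∏_{r ∈ Fin n} x_{i(r)}) / ‖x‖ⁿ. Then for every k, l ∈ Fin 3 and every x ≠ 0, ∂_l ∂_k P(x) = (1/‖x‖²) [ ∑_{r ≠ s} [i(r) = k][i(s) = l] (∏_{t ≠ r, s} x_{i(t)}) / ‖x‖^{n−2} − n ∑_{r} [i(r) = k] (∏_{s ≠ r} x_{i(s)}) x_l / ‖x‖ⁿ − n ∑_{s} [i(s) = l] (∏_{r ≠ s} x_{i(r)}) x_k / ‖x‖ⁿ − n δ_{kl} (∏_{r} x_{i(r)}) / ‖x‖ⁿ + n(n+2) (∏_{r} x_{i(r)}) x_k x_l / ‖x‖^{n+2} ], where [·] denotes the indicator (1 if the condition holds, 0 otherwise) and δ_{kl} is the Kronecker delta. -/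
noncomputable section

open Finset

local notation "𝓔" => EuclideanSpace ℝ (Fin 3)


lemma eval_proj (j l : Fin 3) :
    (EuclideanSpace.proj j : 𝓔 →L[ℝ] ℝ) (EuclideanSpace.single l (1:ℝ)) =
      if j = l then 1 else 0 := by
  simp [EuclideanSpace.single_apply, eq_comm]

lemma eval_inner (x : 𝓔) (l : Fin 3) :
    (innerSL ℝ x) (EuclideanSpace.single l (1:ℝ)) = x l := by
  simp [EuclideanSpace.inner_single_right]

lemma norm_hasFDerivAt {x : 𝓔} (hx : x ≠ 0) :
    HasFDerivAt (fun y : 𝓔 => ‖y‖) (‖x‖⁻¹ • innerSL ℝ x) x := by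
  have hN : ‖x‖ ≠ 0 := norm_ne_zero_iff.mpr hx
  have h2 : HasFDerivAt (fun y : 𝓔 => ‖y‖ ^ 2) (2 • innerSL ℝ x) x := by
    simpa using (hasFDerivAt_id x).norm_sq
  have hs := h2.sqrt (by positivity)
  have hfun : (fun y : 𝓔 => Real.sqrt (‖y‖ ^ 2)) = fun y : 𝓔 => ‖y‖ := by
    funext y; exact Real.sqrt_sq (norm_nonneg y)
  rw [hfun] at hs
  refine hs.congr_fderiv ?_
  symm
  ext y
  rw [Real.sqrt_sq (norm_nonneg x)]
  simp [smul_smul]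
  field_simp

lemma normpow_hasFDerivAt (m : ℕ) {x : 𝓔} (hx : x ≠ 0) :
    HasFDerivAt (fun y : 𝓔 => ‖y‖ ^ m)
      (((m : ℝ) * ‖x‖ ^ m / ‖x‖ ^ 2) • innerSL ℝ x) x := by
  have hN : ‖x‖ ≠ 0 := norm_ne_zero_iff.mpr hx
  have h := (hasDerivAt_pow m ‖x‖).comp_hasFDerivAt x (norm_hasFDerivAt hx)
  refine h.congr_fderiv ?_
  symm
  rw [smul_smul]
  congr 1
  cases m with
  | zero => simp
  | succ m =>
    push_cast
    field_simp
    ring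

lemma prod_hasFDerivAt {n : ℕ} (i : Fin n → Fin 3) (u : Finset (Fin n)) (x : 𝓔) :
    HasFDerivAt (fun y : 𝓔 => ∏ r ∈ u, y (i r))
      (∑ r ∈ u, (∏ s ∈ u.erase r, x (i s)) • (EuclideanSpace.proj (i r) : 𝓔 →L[ℝ] ℝ)) x := by
  have hp : ∀ r ∈ u, HasFDerivAt (fun y : 𝓔 => y (i r))
      ((EuclideanSpace.proj (i r) : 𝓔 →L[ℝ] ℝ)) x :=
    fun r _ => by
      have h := (EuclideanSpace.proj (i r) : 𝓔 →L[ℝ] ℝ).hasFDerivAt (x := x)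
      exact h
  exact HasFDerivAt.finset_prod hp

lemma inv_normpow_hasFDerivAt (m : ℕ) {x : 𝓔} (hx : x ≠ 0) :
    HasFDerivAt (fun y : 𝓔 => (‖y‖ ^ m)⁻¹)
      ((-(m : ℝ) * (‖x‖ ^ m)⁻¹ / ‖x‖ ^ 2) • innerSL ℝ x) x := by
  have hN : ‖x‖ ≠ 0 := norm_ne_zero_iff.mpr hx
  have h := (hasDerivAt_inv (pow_ne_zero m hN)).comp_hasFDerivAt x (normpow_hasFDerivAt m hx)
  refine h.congr_fderiv ?_
  symm
  rw [smul_smul]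
  congr 1
  field_simp

lemma pderiv_P {n : ℕ} (i : Fin n → Fin 3) (k : Fin 3) {x : 𝓔} (hx : x ≠ 0) :
    pderiv3 (fun x : 𝓔 => (∏ r : Fin n, x (i r)) / ‖x‖ ^ n) k x
      = (∑ r : Fin n, (if i r = k then (1:ℝ) else 0) * ∏ s ∈ univ.erase r, x (i s)) / ‖x‖ ^ n
        - n * ((∏ r : Fin n, x (i r)) * x k) / ‖x‖ ^ (n + 2) := by
  have hN : ‖x‖ ≠ 0 := norm_ne_zero_iff.mpr hx
  have hd := (prod_hasFDerivAt i univ x).mul (inv_normpow_hasFDerivAt n hx)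
  rw [pderiv3]
  simp only [div_eq_mul_inv]
  simp only [Pi.mul_def, Pi.sub_def] at hd
  rw [hd.fderiv]
  simp only [ContinuousLinearMap.add_apply, ContinuousLinearMap.smul_apply,
    ContinuousLinearMap.coe_sum', Finset.sum_apply, eval_proj, eval_inner, smul_eq_mul]
  rw [add_comm, sub_eq_add_neg]
  congr 1
  · rw [Finset.mul_sum, Finset.sum_mul]
    exact Finset.sum_congr rfl fun r _ => by ring
  · field_simp
    ring

lemma pderiv_G {n : ℕ} (i : Fin n → Fin 3) (k l : Fin 3) {x : 𝓔} (hx : x ≠ 0) :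
    pderiv3 (fun x : 𝓔 =>
        (∑ r : Fin n, (if i r = k then (1:ℝ) else 0) * ∏ s ∈ univ.erase r, x (i s)) / ‖x‖ ^ n
        - n * ((∏ r : Fin n, x (i r)) * x k) / ‖x‖ ^ (n + 2)) l x
      = (∑ r : Fin n, ∑ s ∈ univ.erase r, (if i r = k then (1:ℝ) else 0) *
            (if i s = l then (1:ℝ) else 0) * ∏ t ∈ (univ.erase r).erase s, x (i t)) / ‖x‖ ^ n
        - n * (∑ r : Fin n, (if i r = k then (1:ℝ) else 0) * ∏ s ∈ univ.erase r, x (i s))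
            * x l / ‖x‖ ^ (n + 2)
        - n * (∑ s : Fin n, (if i s = l then (1:ℝ) else 0) * ∏ r ∈ univ.erase s, x (i r))
            * x k / ‖x‖ ^ (n + 2)
        - n * (if k = l then (1:ℝ) else 0) * (∏ r : Fin n, x (i r)) / ‖x‖ ^ (n + 2)
        + n * (n + 2) * ((∏ r : Fin n, x (i r)) * x k * x l) / ‖x‖ ^ (n + 4) := by
  have hN : ‖x‖ ≠ 0 := norm_ne_zero_iff.mpr hx
  have hd1 : HasFDerivAt
      (fun y : 𝓔 => ∑ r : Fin n, (if i r = k then (1:ℝ) else 0) * ∏ s ∈ univ.erase r, y (i s))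
      (∑ r : Fin n, (if i r = k then (1:ℝ) else 0) •
        (∑ s ∈ univ.erase r, (∏ t ∈ (univ.erase r).erase s, x (i t)) •
          (EuclideanSpace.proj (i s) : 𝓔 →L[ℝ] ℝ))) x :=
    HasFDerivAt.fun_sum (fun r _ => (prod_hasFDerivAt i (univ.erase r) x).const_mul _)
  have hd2 := hd1.mul (inv_normpow_hasFDerivAt n hx)
  have hck : HasFDerivAt (fun y : 𝓔 => y k) ((EuclideanSpace.proj k : 𝓔 →L[ℝ] ℝ)) x := by
    have h := (EuclideanSpace.proj k : 𝓔 →L[ℝ] ℝ).hasFDerivAt (x := x)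
    exact h
  have hd3 := (prod_hasFDerivAt i univ x).mul hck
  have hd4 := (hd3.const_mul (n : ℝ)).mul (inv_normpow_hasFDerivAt (n + 2) hx)
  have hd := hd2.sub hd4
  rw [pderiv3]
  simp only [div_eq_mul_inv]
  simp only [Pi.mul_def, Pi.sub_def] at hd
  rw [hd.fderiv]
  simp only [ContinuousLinearMap.sub_apply, ContinuousLinearMap.add_apply,
    ContinuousLinearMap.smul_apply, ContinuousLinearMap.coe_sum', Finset.sum_apply,
    eval_proj, eval_inner, smul_eq_mul]
  rw [show (∑ r : Fin n, (if i r = k then (1:ℝ) else 0) *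
        ∑ s ∈ Finset.univ.erase r,
          (∏ t ∈ (Finset.univ.erase r).erase s, x (i t)) * if i s = l then (1:ℝ) else 0)
      = ∑ r : Fin n, ∑ s ∈ Finset.univ.erase r,
          ((if i r = k then (1:ℝ) else 0) * if i s = l then (1:ℝ) else 0) *
            ∏ t ∈ (Finset.univ.erase r).erase s, x (i t) from
    Finset.sum_congr rfl fun r _ => by rw [Finset.mul_sum]; exact Finset.sum_congr rfl fun s _ => by ring]
  rw [show (∑ r : Fin n, (∏ s ∈ Finset.univ.erase r, x (i s)) * if i r = l then (1:ℝ) else 0)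
      = ∑ s : Fin n, (if i s = l then (1:ℝ) else 0) * ∏ r ∈ Finset.univ.erase s, x (i r) from
    Finset.sum_congr rfl fun r _ => by ring]
  set p := ∏ r : Fin n, x (i r) with hp
  set dl := (if k = l then (1:ℝ) else 0) with hdl
  set S1 := ∑ r : Fin n, ∑ s ∈ Finset.univ.erase r,
      ((if i r = k then (1:ℝ) else 0) * if i s = l then (1:ℝ) else 0) *
        ∏ t ∈ (Finset.univ.erase r).erase s, x (i t) with hS1
  set S2 := ∑ r : Fin n, (if i r = k then (1:ℝ) else 0) * ∏ s ∈ Finset.univ.erase r, x (i s) with hS2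
  set S3 := ∑ s : Fin n, (if i s = l then (1:ℝ) else 0) * ∏ r ∈ Finset.univ.erase s, x (i r) with hS3
  push_cast
  field_simp
  ring



/-- Second-derivative (Hessian) formula for the homogeneous
degree-zero monomials `P(x) = x^{i₁}⋯x^{iₙ}/‖x‖ⁿ`. -/
theorem pderiv_pderiv_monomial (n : ℕ) (hn : 1 ≤ n) (i : Fin n → Fin 3) :
    ∀ (k l : Fin 3) (x : EuclideanSpace ℝ (Fin 3)), x ≠ 0 →
      pderiv3 (pderiv3
          (fun x : EuclideanSpace ℝ (Fin 3) => (∏ r : Fin n, x (i r)) / ‖x‖ ^ n) k) l x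
        = (1 / ‖x‖ ^ 2) *
          ((∑ r : Fin n, ∑ s ∈ univ.erase r,
              (if i r = k then (1 : ℝ) else 0) * (if i s = l then (1 : ℝ) else 0) *
                ((∏ t ∈ (univ.erase r).erase s, x (i t)) / ‖x‖ ^ (n - 2)))
            - n * (∑ r : Fin n, (if i r = k then (1 : ℝ) else 0) *
                ((∏ s ∈ univ.erase r, x (i s)) * x l / ‖x‖ ^ n))
            - n * (∑ s : Fin n, (if i s = l then (1 : ℝ) else 0) *
                ((∏ r ∈ univ.erase s, x (i r)) * x k / ‖x‖ ^ n))
            - n * (if k = l then (1 : ℝ) else 0) * ((∏ r : Fin n, x (i r)) / ‖x‖ ^ n)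
            + n * (n + 2) * ((∏ r : Fin n, x (i r)) * x k * x l / ‖x‖ ^ (n + 2))) := by
  intro k l x hx
  have hN : ‖x‖ ≠ 0 := norm_ne_zero_iff.mpr hx
  have heq : pderiv3 (fun x : 𝓔 => (∏ r : Fin n, x (i r)) / ‖x‖ ^ n) k =ᶠ[nhds x]
      (fun x : 𝓔 =>
        (∑ r : Fin n, (if i r = k then (1:ℝ) else 0) * ∏ s ∈ univ.erase r, x (i s)) / ‖x‖ ^ n
        - n * ((∏ r : Fin n, x (i r)) * x k) / ‖x‖ ^ (n + 2)) := by
    filter_upwards [isOpen_compl_singleton.mem_nhds hx] with y hy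
    exact pderiv_P i k hy
  have h2 : pderiv3 (pderiv3
        (fun x : 𝓔 => (∏ r : Fin n, x (i r)) / ‖x‖ ^ n) k) l x
      = pderiv3 (fun x : 𝓔 =>
        (∑ r : Fin n, (if i r = k then (1:ℝ) else 0) * ∏ s ∈ univ.erase r, x (i s)) / ‖x‖ ^ n
        - n * ((∏ r : Fin n, x (i r)) * x k) / ‖x‖ ^ (n + 2)) l x := by
    rw [pderiv3, pderiv3, heq.fderiv_eq]
  rw [h2, pderiv_G i k l hx]
  -- factoring lemmas
  have hF2 : ∀ (c : Fin n → ℝ) (a : ℝ),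
      (∑ r : Fin n, c r * ((∏ s ∈ univ.erase r, x (i s)) * a / ‖x‖ ^ n))
        = (∑ r : Fin n, c r * ∏ s ∈ univ.erase r, x (i s)) * (a / ‖x‖ ^ n) := by
    intro c a
    rw [Finset.sum_mul]
    exact Finset.sum_congr rfl fun r _ => by ring
  have hF1 : (∑ r : Fin n, ∑ s ∈ univ.erase r,
        (if i r = k then (1 : ℝ) else 0) * (if i s = l then (1 : ℝ) else 0) *
          ((∏ t ∈ (univ.erase r).erase s, x (i t)) / ‖x‖ ^ (n - 2)))
      = (∑ r : Fin n, ∑ s ∈ univ.erase r,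
          ((if i r = k then (1 : ℝ) else 0) * if i s = l then (1:ℝ) else 0) *
            ∏ t ∈ (univ.erase r).erase s, x (i t)) * (‖x‖ ^ 2 / ‖x‖ ^ n) := by
    match n, hn with
    | 1, _ =>
      have he : ∀ r : Fin 1, (univ : Finset (Fin 1)).erase r = ∅ := fun r => by
        rw [Finset.univ_unique, Subsingleton.elim r default, Finset.erase_singleton]
      simp [he]
    | (m+2), _ =>
      have hsub : m + 2 - 2 = m := rfl
      rw [hsub]
      have step : ∀ r : Fin (m+2), ∀ s ∈ (univ : Finset (Fin (m+2))).erase r,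
          (if i r = k then (1 : ℝ) else 0) * (if i s = l then (1 : ℝ) else 0) *
            ((∏ t ∈ (univ.erase r).erase s, x (i t)) / ‖x‖ ^ m)
          = (((if i r = k then (1 : ℝ) else 0) * if i s = l then (1:ℝ) else 0) *
              ∏ t ∈ (univ.erase r).erase s, x (i t)) * (‖x‖ ^ 2 / ‖x‖ ^ (m + 2)) := by
        intro r s _
        rw [div_eq_mul_inv, div_eq_mul_inv]
        rw [pow_add]
        field_simp
      rw [Finset.sum_congr rfl fun r _ => Finset.sum_congr rfl (step r)]
      simp only [← Finset.sum_mul]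
  rw [hF1, hF2, hF2]
  set p := ∏ r : Fin n, x (i r) with hp
  set dl := (if k = l then (1:ℝ) else 0) with hdl
  set S1 := ∑ r : Fin n, ∑ s ∈ Finset.univ.erase r,
      ((if i r = k then (1:ℝ) else 0) * if i s = l then (1:ℝ) else 0) *
        ∏ t ∈ (Finset.univ.erase r).erase s, x (i t) with hS1
  set S2 := ∑ r : Fin n, (if i r = k then (1:ℝ) else 0) * ∏ s ∈ Finset.univ.erase r, x (i s) with hS2
  set S3 := ∑ s : Fin n, (if i s = l then (1:ℝ) else 0) * ∏ r ∈ Finset.univ.erase s, x (i r) with hS3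
  push_cast
  field_simp
  ring

end
end

section
/- Let n ≥ 1, let i : Fin n → Fin 3, and define P : E ∖ {0} → ℝ by P(x) = (∏_{r ∈ Fin n} x_{i(r)}) / ‖x‖ⁿ. Then for every x ≠ 0 the Euclidean Laplacian of P satisfies ∑_{k ∈ Fin 3} ∂_k ∂_k P(x) = (1/‖x‖²) [ ∑_{r ≠ s} [i(r) = i(s)] (∏_{t ≠ r, s} x_{i(t)}) / ‖x‖^{n−2} − n(n+1) (∏_{r} x_{i(r)}) / ‖x‖ⁿ ], where [·] denotes the indicator (1 if the condition holds, 0 otherwise). In particular, for n = 1 this gives Δ(x_j/‖x‖) = −2 x_j/‖x‖³. -/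
noncomputable section

open Finset

namespace LapAux

abbrev E3 := EuclideanSpace ℝ (Fin 3)

def Q (x : E3) : ℝ := ∑ k : Fin 3, (x k)^2

lemma Q_eq (x : E3) : Q x = ‖x‖^2 := by
  rw [Q, EuclideanSpace.norm_eq, Real.sq_sqrt (by positivity)]
  simp [Real.norm_eq_abs, sq_abs]

lemma Q_pos {x : E3} (hx : x ≠ 0) : 0 < Q x := by
  rw [Q_eq]
  have : 0 < ‖x‖ := norm_pos_iff.mpr hx
  positivity

def DQ (x : E3) : E3 →L[ℝ] ℝ := ∑ k : Fin 3, (2 * x k) • (EuclideanSpace.proj k : E3 →L[ℝ] ℝ)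

lemma hasFDerivAt_Q (x : E3) : HasFDerivAt Q (DQ x) x := by
  apply HasFDerivAt.fun_sum
  intro k _
  have h1 := (EuclideanSpace.proj k : E3 →L[ℝ] ℝ).hasFDerivAt (x := x)
  have := h1.mul h1
  convert this using 1
  · rfl
  · ext y; simp [sq]
  · ext y; simp; ring

lemma proj_single (j k : Fin 3) :
    (EuclideanSpace.proj j : E3 →L[ℝ] ℝ) (EuclideanSpace.single k 1) = if j = k then 1 else 0 := by
  simp [EuclideanSpace.single_apply, eq_comm]

variable {n : ℕ} (i : Fin n → Fin 3)

def Dprod (u : Finset (Fin n)) (x : E3) : E3 →L[ℝ] ℝ :=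
  ∑ r ∈ u, (∏ t ∈ u.erase r, x (i t)) • (EuclideanSpace.proj (i r) : E3 →L[ℝ] ℝ)

lemma hasFDerivAt_prod (u : Finset (Fin n)) (x : E3) :
    HasFDerivAt (fun x : E3 => ∏ t ∈ u, x (i t)) (Dprod i u x) x :=
  HasFDerivAt.finset_prod (fun r _ => (EuclideanSpace.proj (i r) : E3 →L[ℝ] ℝ).hasFDerivAt)

lemma Dprod_single (u : Finset (Fin n)) (x : E3) (k : Fin 3) :
    Dprod i u x (EuclideanSpace.single k 1)
      = ∑ r ∈ u, if i r = k then ∏ t ∈ u.erase r, x (i t) else 0 := by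
  rw [Dprod]
  simp only [ContinuousLinearMap.coe_sum', Finset.sum_apply, ContinuousLinearMap.coe_smul',
    Pi.smul_apply, proj_single, smul_eq_mul, mul_ite, mul_one, mul_zero]

lemma DQ_single (x : E3) (k : Fin 3) : DQ x (EuclideanSpace.single k 1) = 2 * x k := by
  rw [DQ]
  simp only [ContinuousLinearMap.coe_sum', Finset.sum_apply, ContinuousLinearMap.coe_smul',
    Pi.smul_apply, proj_single, smul_eq_mul, mul_ite, mul_one, mul_zero]
  simp

def P1 : E3 → ℝ := fun x => (∏ r : Fin n, x (i r)) * Q x ^ (-(n:ℝ)/2)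

def F (k : Fin 3) : E3 → ℝ := fun x =>
  (∑ r : Fin n, if i r = k then ∏ t ∈ univ.erase r, x (i t) else 0) * Q x ^ (-(n:ℝ)/2)
  + ((∏ r : Fin n, x (i r)) * ((-(n:ℝ)/2) * Q x ^ (-(n:ℝ)/2 - 1))) * (2 * x k)

lemma hasFDerivAt_P1 {x : E3} (hx : x ≠ 0) :
    HasFDerivAt (P1 i)
      ((Q x ^ (-(n:ℝ)/2)) • Dprod i univ x
        + ((∏ r : Fin n, x (i r)) * ((-(n:ℝ)/2) * Q x ^ (-(n:ℝ)/2 - 1))) • DQ x) x := by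
  have hQp : HasFDerivAt (fun x : E3 => Q x ^ (-(n:ℝ)/2))
      (((-(n:ℝ)/2) * Q x ^ (-(n:ℝ)/2 - 1)) • DQ x) x :=
    (hasFDerivAt_Q x).rpow_const (Or.inl (Q_pos hx).ne')
  have := (hasFDerivAt_prod i univ x).mul hQp
  refine this.congr_fderiv ?_
  ext y
  simp only [ContinuousLinearMap.add_apply, ContinuousLinearMap.smul_apply, smul_eq_mul, Pi.mul_apply]
  ring

lemma pderiv3_P1 {x : E3} (hx : x ≠ 0) (k : Fin 3) :
    fderiv ℝ (P1 i) x (EuclideanSpace.single k 1) = F i k x := by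
  rw [(hasFDerivAt_P1 i hx).fderiv]
  simp only [ContinuousLinearMap.add_apply, ContinuousLinearMap.smul_apply, smul_eq_mul,
    Dprod_single, DQ_single, F]
  ring

def DS (k : Fin 3) (x : E3) : E3 →L[ℝ] ℝ :=
  ∑ r : Fin n, if i r = k then Dprod i (univ.erase r) x else 0

lemma hasFDerivAt_S (k : Fin 3) (x : E3) :
    HasFDerivAt (fun x : E3 => ∑ r : Fin n, if i r = k then ∏ t ∈ univ.erase r, x (i t) else 0)
      (DS i k x) x := by
  apply HasFDerivAt.fun_sum
  intro r _
  by_cases h : i r = k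
  · simpa [h] using hasFDerivAt_prod i (univ.erase r) x
  · simpa [h] using hasFDerivAt_const (0:ℝ) x

lemma DS_single (k : Fin 3) (x : E3) :
    DS i k x (EuclideanSpace.single k 1)
      = ∑ r : Fin n, if i r = k then
          (∑ s ∈ univ.erase r, if i s = k then ∏ t ∈ (univ.erase r).erase s, x (i t) else 0)
        else 0 := by
  rw [DS]
  simp only [ContinuousLinearMap.coe_sum', Finset.sum_apply]
  refine Finset.sum_congr rfl fun r _ => ?_
  rw [apply_ite (fun L : E3 →L[ℝ] ℝ => L (EuclideanSpace.single k 1))]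
  simp [Dprod_single]

lemma pderiv3_F {x : E3} (hx : x ≠ 0) (k : Fin 3) :
    fderiv ℝ (F i k) x (EuclideanSpace.single k 1) =
      (∑ r : Fin n, if i r = k then
          (∑ s ∈ univ.erase r, if i s = k then ∏ t ∈ (univ.erase r).erase s, x (i t) else 0)
        else 0) * Q x ^ (-(n:ℝ)/2)
      + (∑ r : Fin n, if i r = k then ∏ t ∈ univ.erase r, x (i t) else 0)
          * ((-(n:ℝ)/2) * Q x ^ (-(n:ℝ)/2 - 1)) * (2 * x k) * 2
      + (∏ r : Fin n, x (i r)) * ((-(n:ℝ)/2) * ((-(n:ℝ)/2 - 1) * Q x ^ (-(n:ℝ)/2 - 1 - 1)))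
          * (2 * x k) * (2 * x k)
      + (∏ r : Fin n, x (i r)) * ((-(n:ℝ)/2) * Q x ^ (-(n:ℝ)/2 - 1)) * 2 := by
  have hQ0 : Q x ≠ 0 := (Q_pos hx).ne'
  have hQp : HasFDerivAt (fun x : E3 => Q x ^ (-(n:ℝ)/2))
      (((-(n:ℝ)/2) * Q x ^ (-(n:ℝ)/2 - 1)) • DQ x) x :=
    (hasFDerivAt_Q x).rpow_const (Or.inl hQ0)
  have hQp1 : HasFDerivAt (fun x : E3 => Q x ^ (-(n:ℝ)/2 - 1))
      (((-(n:ℝ)/2 - 1) * Q x ^ (-(n:ℝ)/2 - 1 - 1)) • DQ x) x :=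
    (hasFDerivAt_Q x).rpow_const (Or.inl hQ0)
  have hM := hasFDerivAt_prod i univ x
  have hS := hasFDerivAt_S i k x
  have hxk : HasFDerivAt (fun x : E3 => 2 * x k)
      ((2:ℝ) • (EuclideanSpace.proj k : E3 →L[ℝ] ℝ)) x :=
    ((EuclideanSpace.proj k : E3 →L[ℝ] ℝ).hasFDerivAt).const_mul 2
  have h := (hS.mul hQp).add ((hM.mul (hQp1.const_mul (-(n:ℝ)/2))).mul hxk)
  have h2 : HasFDerivAt (F i k) _ x := h
  rw [h2.fderiv]
  simp only [ContinuousLinearMap.add_apply, ContinuousLinearMap.smul_apply, smul_eq_mul,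
    Dprod_single, DQ_single, DS_single, proj_single, eq_self_iff_true, if_true, Pi.mul_apply]
  ring

lemma rpow_sq (a : ℝ) (ha : 0 < a) (q : ℝ) : ((a^2 : ℝ)) ^ q = a ^ (2*q) := by
  rw [← Real.rpow_natCast a 2, ← Real.rpow_mul ha.le]
  norm_num

lemma Qpow1 {x : E3} (hx : x ≠ 0) : Q x ^ (-(n:ℝ)/2) = (‖x‖^n)⁻¹ := by
  have ha : (0:ℝ) < ‖x‖ := norm_pos_iff.mpr hx
  rw [Q_eq, rpow_sq _ ha, show (2:ℝ) * (-(n:ℝ)/2) = -(n:ℝ) by ring,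
    Real.rpow_neg ha.le, Real.rpow_natCast]

lemma Qpow2 {x : E3} (hx : x ≠ 0) : Q x ^ (-(n:ℝ)/2 - 1) = (‖x‖^n * ‖x‖^2)⁻¹ := by
  have ha : (0:ℝ) < ‖x‖ := norm_pos_iff.mpr hx
  rw [Q_eq, rpow_sq _ ha, show (2:ℝ) * (-(n:ℝ)/2 - 1) = -((n+2 : ℕ):ℝ) by push_cast; ring,
    Real.rpow_neg ha.le, Real.rpow_natCast, pow_add]

lemma G_eventually_P1 {x : E3} (hx : x ≠ 0) :
    (fun y : E3 => (∏ r : Fin n, y (i r)) / ‖y‖ ^ n) =ᶠ[nhds x] P1 i := by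
  filter_upwards [IsOpen.mem_nhds isOpen_compl_singleton hx] with y hy
  have hy' : (y : E3) ≠ 0 := hy
  rw [P1, Qpow1 (n := n) hy', div_eq_mul_inv]

lemma fst_deriv {x : E3} (hx : x ≠ 0) (k : Fin 3) :
    pderiv3 (fun y : EuclideanSpace ℝ (Fin 3) => (∏ r : Fin n, y (i r)) / ‖y‖ ^ n) k x
      = F i k x := by
  rw [pderiv3, (G_eventually_P1 i hx).fderiv_eq]
  exact pderiv3_P1 i hx k

lemma snd_deriv {x : E3} (hx : x ≠ 0) (k : Fin 3) :
    pderiv3 (pderiv3 (fun y : EuclideanSpace ℝ (Fin 3) =>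
        (∏ r : Fin n, y (i r)) / ‖y‖ ^ n) k) k x =
      (∑ r : Fin n, if i r = k then
          (∑ s ∈ univ.erase r, if i s = k then ∏ t ∈ (univ.erase r).erase s, x (i t) else 0)
        else 0) * Q x ^ (-(n:ℝ)/2)
      + (∑ r : Fin n, if i r = k then ∏ t ∈ univ.erase r, x (i t) else 0)
          * ((-(n:ℝ)/2) * Q x ^ (-(n:ℝ)/2 - 1)) * (2 * x k) * 2
      + (∏ r : Fin n, x (i r)) * ((-(n:ℝ)/2) * ((-(n:ℝ)/2 - 1) * Q x ^ (-(n:ℝ)/2 - 1 - 1)))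
          * (2 * x k) * (2 * x k)
      + (∏ r : Fin n, x (i r)) * ((-(n:ℝ)/2) * Q x ^ (-(n:ℝ)/2 - 1)) * 2 := by
  have hev : pderiv3 (fun y : EuclideanSpace ℝ (Fin 3) =>
      (∏ r : Fin n, y (i r)) / ‖y‖ ^ n) k =ᶠ[nhds x] F i k := by
    filter_upwards [IsOpen.mem_nhds isOpen_compl_singleton hx] with y hy
    exact fst_deriv i hy k
  rw [pderiv3, hev.fderiv_eq]
  exact pderiv3_F i hx k

end LapAux

open LapAux in
/-- Laplacian formula for the homogeneous degree-zero monomials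
`P(x) = x^{i₁}⋯x^{iₙ}/‖x‖ⁿ`:
`ΔP(x) = (1/‖x‖²)[∑_{r≠s} δ_{i(r),i(s)} (∏_{t≠r,s} x_{i(t)})/‖x‖^{n-2} − n(n+1)(∏ᵣ x_{i(r)})/‖x‖ⁿ]`. -/
theorem laplacian_monomial (n : ℕ) (hn : 1 ≤ n) (i : Fin n → Fin 3) :
    ∀ x : EuclideanSpace ℝ (Fin 3), x ≠ 0 →
      (∑ k : Fin 3, pderiv3 (pderiv3
          (fun x : EuclideanSpace ℝ (Fin 3) => (∏ r : Fin n, x (i r)) / ‖x‖ ^ n) k) k x)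
        = (1 / ‖x‖ ^ 2) *
          ((∑ r : Fin n, ∑ s ∈ univ.erase r,
              (if i r = i s then (1 : ℝ) else 0) *
                ((∏ t ∈ (univ.erase r).erase s, x (i t)) / ‖x‖ ^ (n - 2)))
            - n * (n + 1) * ((∏ r : Fin n, x (i r)) / ‖x‖ ^ n)) := by
  intro x hx
  have ha : (0:ℝ) < ‖x‖ := norm_pos_iff.mpr hx
  rw [Finset.sum_congr rfl fun k _ => snd_deriv i hx k]
  have hQ0 : Q x ≠ 0 := (Q_pos hx).ne'
  set W : Fin 3 → ℝ := fun k => ∑ r : Fin n, if i r = k then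
      (∑ s ∈ univ.erase r, if i s = k then ∏ t ∈ (univ.erase r).erase s, x (i t) else 0)
    else 0 with hW
  set S : Fin 3 → ℝ := fun k => ∑ r : Fin n, if i r = k then ∏ t ∈ univ.erase r, x (i t) else 0
    with hS
  set M : ℝ := ∏ r : Fin n, x (i r) with hM
  have e1 : ∀ k : Fin 3,
      W k * Q x ^ (-(n:ℝ)/2)
      + S k * ((-(n:ℝ)/2) * Q x ^ (-(n:ℝ)/2 - 1)) * (2 * x k) * 2
      + M * ((-(n:ℝ)/2) * ((-(n:ℝ)/2 - 1) * Q x ^ (-(n:ℝ)/2 - 1 - 1)))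
          * (2 * x k) * (2 * x k)
      + M * ((-(n:ℝ)/2) * Q x ^ (-(n:ℝ)/2 - 1)) * 2
    = W k * Q x ^ (-(n:ℝ)/2)
      + (S k * x k) * ((-2*(n:ℝ)) * Q x ^ (-(n:ℝ)/2 - 1))
      + (x k ^ 2) * (M * ((-2*(n:ℝ)) * (-(n:ℝ)/2 - 1) * Q x ^ (-(n:ℝ)/2 - 1 - 1)))
      + M * (-(n:ℝ)) * Q x ^ (-(n:ℝ)/2 - 1) := fun k => by ring
  rw [Finset.sum_congr rfl fun k _ => e1 k]
  simp only [Finset.sum_add_distrib, ← Finset.sum_mul, Finset.sum_const, Finset.card_univ,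
    Fintype.card_fin, nsmul_eq_mul]
  have hA : ∑ k : Fin 3, W k
      = ∑ r : Fin n, ∑ s ∈ univ.erase r,
          (if i r = i s then (1 : ℝ) else 0) * ∏ t ∈ (univ.erase r).erase s, x (i t) := by
    rw [hW, Finset.sum_comm]
    refine Finset.sum_congr rfl fun r _ => ?_
    rw [Finset.sum_ite_eq]
    simp only [Finset.mem_univ, if_true]
    refine Finset.sum_congr rfl fun s _ => ?_
    by_cases h : i r = i s
    · simp [h]
    · rw [if_neg h, if_neg (fun hh => h hh.symm), zero_mul]
  have hB : ∑ k : Fin 3, S k * x k = (n:ℝ) * M := by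
    rw [hS]
    simp only [Finset.sum_mul, ite_mul, zero_mul]
    rw [Finset.sum_comm]
    have : ∀ r : Fin n, (∑ k : Fin 3, if i r = k then (∏ t ∈ univ.erase r, x (i t)) * x k else 0)
        = M := by
      intro r
      rw [Finset.sum_ite_eq]
      simp only [Finset.mem_univ, if_true]
      rw [hM, Finset.prod_erase_mul univ _ (Finset.mem_univ r)]
    rw [Finset.sum_congr rfl fun r _ => this r, Finset.sum_const, Finset.card_univ,
      Fintype.card_fin, nsmul_eq_mul]
  have hC : ∑ k : Fin 3, x k ^ 2 = Q x := rfl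
  rw [hA, hB, hC]
  have hQQ : Q x * Q x ^ (-(n:ℝ)/2 - 1 - 1) = Q x ^ (-(n:ℝ)/2 - 1) := by
    rw [mul_comm, ← Real.rpow_add_one hQ0]
    ring_nf
  rw [Qpow1 (n := n) hx, Qpow2 (n := n) hx]
  have hfact : ∀ r : Fin n, ∀ s ∈ univ.erase r,
      (if i r = i s then (1 : ℝ) else 0) *
        ((∏ t ∈ (univ.erase r).erase s, x (i t)) / ‖x‖ ^ (n - 2))
      = ((if i r = i s then (1 : ℝ) else 0) * ∏ t ∈ (univ.erase r).erase s, x (i t))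
          / ‖x‖ ^ (n - 2) := fun r s _ => by rw [mul_div_assoc]
  rw [Finset.sum_congr rfl fun r _ => Finset.sum_congr rfl (hfact r),
    Finset.sum_congr rfl fun r _ => (Finset.sum_div _ _ _).symm, ← Finset.sum_div]
  set Δ : ℝ := ∑ r : Fin n, ∑ s ∈ univ.erase r,
      (if i r = i s then (1 : ℝ) else 0) * ∏ t ∈ (univ.erase r).erase s, x (i t) with hΔ
  have h3 : LapAux.Q x * (M * (-2 * (n:ℝ) * (-(n:ℝ)/2 - 1) * LapAux.Q x ^ (-(n:ℝ)/2 - 1 - 1)))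
      = M * (-2*(n:ℝ) * (-(n:ℝ)/2 - 1)) * (‖x‖^n * ‖x‖^2)⁻¹ := by
    rw [← Qpow2 (n := n) hx, ← hQQ]; ring
  rw [h3]
  have hane : (‖x‖ : ℝ) ≠ 0 := ha.ne'
  rcases eq_or_lt_of_le hn with h1 | h2
  · subst h1
    have hΔ0 : Δ = 0 := by
      rw [hΔ]
      refine Finset.sum_eq_zero fun r _ => Finset.sum_eq_zero fun s hs => ?_
      exact absurd (Subsingleton.elim s r) (Finset.ne_of_mem_erase hs)
    rw [hΔ0]
    push_cast
    field_simp
    ring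
  · have h2' : 2 ≤ n := h2
    have hpow : (‖x‖:ℝ)^(n-2) * ‖x‖^2 = ‖x‖^n := by
      rw [← pow_add, Nat.sub_add_cancel h2']
    rw [← hpow]
    field_simp
    ring

end
end
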